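/- arXiv:math/0304253 — 4 statements merged into one kernel-verified Lean document; each statement's English description precedes it below -/
import Mathlib

section
/- Let K_1, …, K_n be positive kernel operators on L²(X, μ). Assume f_1, …, f_n and g_1, …, g_n are strictly positive a.e. nonnegative functions in L²(X, μ) satisfying K_i f_i = r(K_i) f_i and K_i* g_i = r(K_i) g_i for each i, normalized so that f_i·g_i = h for all i (the same function h) and ∫_X h dμ = 1. Then for all positive real numbers t_1, …, t_n, r( t_1 K_1 + … + t_n K_n ) ≥ t_1 r(K_1) + … + t_n r(K_n). -/
open MeasureTheory
open scoped ENNReal ComplexOrder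

noncomputable section

/-- `K` is a positive kernel operator on `L²(X, μ)`: there is a nonnegative measurable
kernel `k` on `X × X` such that for every `f ∈ L²` and almost every `x`,
`∫ k(x,y)|f(y)| dμ(y) < ∞` and `(K f)(x) = ∫ k(x,y) f(y) dμ(y)`. -/
def IsPosKernelOp {X : Type*} [MeasurableSpace X] (μ : Measure X)
    (K : Lp ℂ 2 μ →L[ℂ] Lp ℂ 2 μ) : Prop :=
  ∃ k : X → X → ℝ, Measurable (Function.uncurry k) ∧ (∀ x y, 0 ≤ k x y) ∧
    ∀ f : Lp ℂ 2 μ,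
      (∀ᵐ x ∂μ, Integrable (fun y => k x y * ‖(f : X → ℂ) y‖) μ) ∧
      (∀ᵐ x ∂μ, (K f : X → ℂ) x = ∫ y, (k x y : ℂ) * (f : X → ℂ) y ∂μ)

/-- `D` is the operator of multiplication by the (real-valued) function `d`. -/
def IsMulOp {X : Type*} [MeasurableSpace X] (μ : Measure X) (d : X → ℝ)
    (D : Lp ℂ 2 μ →L[ℂ] Lp ℂ 2 μ) : Prop :=
  ∀ f : Lp ℂ 2 μ, (D f : X → ℂ) =ᵐ[μ] fun x => (d x : ℂ) * (f : X → ℂ) x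

/-- A bounded operator on `L²(X, μ)` is positive if it maps a.e. nonnegative functions to
a.e. nonnegative functions (`0 ≤ z` in the complex order means `z` is real and `z ≥ 0`). -/
def IsPositiveOp {X : Type*} [MeasurableSpace X] (μ : Measure X)
    (A : Lp ℂ 2 μ →L[ℂ] Lp ℂ 2 μ) : Prop :=
  ∀ f : Lp ℂ 2 μ, (∀ᵐ x ∂μ, 0 ≤ (f : X → ℂ) x) → (∀ᵐ x ∂μ, 0 ≤ (A f : X → ℂ) x)

open scoped Classical in
/-- `exp (∫ F dμ)` with the convention `exp (-∞) = 0`: for the integrands appearing below the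
positive part is always integrable, so non-integrability means the integral is `-∞`. -/
def expInt {X : Type*} [MeasurableSpace X] (μ : Measure X) (F : X → ℝ) : ℝ :=
  if Integrable F μ then Real.exp (∫ x, F x ∂μ) else 0

/-- The numerical radius `w(A) = sup { |⟨A f, f⟩| : ‖f‖₂ = 1 }`. -/
def numRad {X : Type*} [MeasurableSpace X] (μ : Measure X)
    (A : Lp ℂ 2 μ →L[ℂ] Lp ℂ 2 μ) : ℝ :=
  sSup {r : ℝ | ∃ f : Lp ℂ 2 μ, ‖f‖ = 1 ∧ r = ‖(inner ℂ (A f) f : ℂ)‖}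

/-!
For positive `v` write `E(v) = ∫ h log (v / √h) dμ` (the integral of `weightedLogRatio h v`).
For each `i`, `k_i(x,y) f_i(y) dy / (ρ_i f_i(x))` is a Markov kernel with stationary density
`h = f_i g_i`, so Jensen's inequality for `exp` gives `E(K_i v) ≥ E(v) + log ρ_i`, where
`ρ_i = r(K_i)`. Concavity of `log` upgrades this to `E(T v) ≥ E(v) + log λ` for
`T = ∑ t_i K_i` and `λ = ∑ t_i ρ_i`. Starting from `v = √h`, which has `E(√h) = 0`, we get
`E(T^m √h) ≥ m log λ`, while Jensen once more gives `exp E(v) ≤ ⟪√h, v⟫ ≤ ‖v‖`. Hence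
`λ^m ≤ ‖T^m‖` for all `m`, and Gelfand's formula gives `λ ≤ r(T)`.
-/

open Filter

section

variable {X : Type*} [MeasurableSpace X] {μ : Measure X}

theorem mul_log_div_sqrt_le {h v : ℝ} (hh : 0 < h) (hv : 0 < v) :
    h * Real.log (v / Real.sqrt h) ≤ Real.sqrt h * v := by
  have hs := Real.sqrt_pos.2 hh
  calc h * Real.log (v / Real.sqrt h) ≤ h * (v / Real.sqrt h) :=
        mul_le_mul_of_nonneg_left (Real.log_le_self (by positivity)) hh.le
    _ = Real.sqrt h * v := by
        field_simp
        rw [Real.sq_sqrt hh.le]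

theorem mul_log_add_le_of_mul_exp_le {ρ a b h N w : ℝ} (hρ : 0 < ρ) (ha : 0 < a) (hb : 0 < b)
    (hab : a * b = h) (hw : ρ * a * Real.exp (N / (ρ * a)) ≤ w) :
    h * Real.log ρ + h * Real.log (a / Real.sqrt h) + b * N / ρ
      ≤ h * Real.log (w / Real.sqrt h) := by
  have hh : 0 < h := hab ▸ mul_pos ha hb
  have hs := Real.sqrt_pos.2 hh
  have hlog := Real.log_le_log (by positivity) (div_le_div_of_nonneg_right hw hs.le)
  rw [Real.log_div (by positivity) hs.ne', Real.log_mul (by positivity) (Real.exp_pos _).ne',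
    Real.log_mul hρ.ne' ha.ne', Real.log_exp] at hlog
  have hN : h * (N / (ρ * a)) = b * N / ρ := by
    rw [← hab]; field_simp
  calc h * Real.log ρ + h * Real.log (a / Real.sqrt h) + b * N / ρ
      = h * (Real.log ρ + Real.log a + N / (ρ * a) - Real.log (Real.sqrt h)) := by
        rw [Real.log_div ha.ne' hs.ne', ← hN]; ring
    _ ≤ h * Real.log (w / Real.sqrt h) := mul_le_mul_of_nonneg_left hlog hh.le

theorem mul_mul_log_div_eq_sub {a b h v : ℝ} (ha : 0 < a) (hb : 0 < b) (hv : 0 < v)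
    (hab : a * b = h) :
    b * (a * Real.log (v / a))
      = h * Real.log (v / Real.sqrt h) - h * Real.log (a / Real.sqrt h) := by
  have hs := Real.sqrt_pos.2 (hab ▸ mul_pos ha hb)
  rw [Real.log_div hv.ne' ha.ne', Real.log_div hv.ne' hs.ne', Real.log_div ha.ne' hs.ne', ← hab]
  ring

theorem log_add_sum_mul_log_div_le {ι : Type*} (s : Finset ι) (hs : s.Nonempty)
    {t ρ w : ι → ℝ} (ht : ∀ i ∈ s, 0 < t i) (hρ : ∀ i ∈ s, 0 < ρ i) (hw : ∀ i ∈ s, 0 < w i) :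
    Real.log (∑ i ∈ s, t i * ρ i)
        + ∑ i ∈ s, t i * ρ i / (∑ j ∈ s, t j * ρ j) * Real.log (w i / ρ i)
      ≤ Real.log (∑ i ∈ s, t i * w i) := by
  set c := ∑ j ∈ s, t j * ρ j
  have hc : 0 < c := Finset.sum_pos (fun i hi => mul_pos (ht i hi) (hρ i hi)) hs
  have hθ1 : ∑ i ∈ s, t i * ρ i / c = 1 := by rw [← Finset.sum_div, div_self hc.ne']
  have hjensen := strictConcaveOn_log_Ioi.concaveOn.le_map_sum (t := s)
    (w := fun i => t i * ρ i / c) (p := fun i => c * (w i / ρ i))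
    (fun i hi => (div_pos (mul_pos (ht i hi) (hρ i hi)) hc).le) hθ1
    (fun i hi => mul_pos hc (div_pos (hw i hi) (hρ i hi)))
  have hmean : ∑ i ∈ s, t i * ρ i / c * (c * (w i / ρ i)) = ∑ i ∈ s, t i * w i :=
    Finset.sum_congr rfl fun i hi => by field_simp [(hρ i hi).ne']
  have hlog : ∑ i ∈ s, t i * ρ i / c * Real.log (c * (w i / ρ i))
      = Real.log c + ∑ i ∈ s, t i * ρ i / c * Real.log (w i / ρ i) := by
    rw [← one_mul (Real.log c), ← hθ1, Finset.sum_mul, ← Finset.sum_add_distrib]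
    refine Finset.sum_congr rfl fun i hi => ?_
    rw [Real.log_mul hc.ne' (div_pos (hw i hi) (hρ i hi)).ne']
    ring
  simp only [smul_eq_mul, hmean] at hjensen
  rwa [hlog] at hjensen

theorem mul_log_add_sum_le_mul_log {ι : Type*} (s : Finset ι) (hs : s.Nonempty)
    {t ρ w : ι → ℝ} (ht : ∀ i ∈ s, 0 < t i) (hρ : ∀ i ∈ s, 0 < ρ i) (hw : ∀ i ∈ s, 0 < w i)
    {h V : ℝ} (hh : 0 < h) (hV : ∑ i ∈ s, t i * w i ≤ V) :
    h * Real.log (∑ i ∈ s, t i * ρ i) + ∑ i ∈ s, t i * ρ i / (∑ j ∈ s, t j * ρ j)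
        * (h * Real.log (w i / Real.sqrt h) - h * Real.log (ρ i))
      ≤ h * Real.log (V / Real.sqrt h) := by
  have hsq := Real.sqrt_pos.2 hh
  have hconc := log_add_sum_mul_log_div_le s hs ht hρ (w := fun i => w i / Real.sqrt h)
    fun i hi => div_pos (hw i hi) hsq
  have hmono : Real.log (∑ i ∈ s, t i * (w i / Real.sqrt h)) ≤ Real.log (V / Real.sqrt h) := by
    refine Real.log_le_log (Finset.sum_pos (fun i hi =>
      mul_pos (ht i hi) (div_pos (hw i hi) hsq)) hs) ?_
    simp_rw [mul_div_assoc', ← Finset.sum_div]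
    exact div_le_div_of_nonneg_right hV hsq.le
  calc _ = h * (Real.log (∑ i ∈ s, t i * ρ i) + ∑ i ∈ s, t i * ρ i / (∑ j ∈ s, t j * ρ j)
          * Real.log (w i / Real.sqrt h / ρ i)) := by
        simp only [mul_add, Finset.mul_sum]
        congr 1
        refine Finset.sum_congr rfl fun i hi => ?_
        rw [Real.log_div (div_pos (hw i hi) hsq).ne' (hρ i hi).ne']
        ring
    _ ≤ h * Real.log (V / Real.sqrt h) := mul_le_mul_of_nonneg_left (hconc.trans hmono) hh.le

theorem integral_mul_exp_ge {w φ : X → ℝ} (hw : Integrable w μ)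
    (hwφ : Integrable (fun y => w y * φ y) μ)
    (hwexp : Integrable (fun y => w y * Real.exp (φ y)) μ) (hw0 : ∀ᵐ y ∂μ, 0 ≤ w y)
    (hpos : 0 < ∫ y, w y ∂μ) :
    (∫ y, w y ∂μ) * Real.exp ((∫ y, w y * φ y ∂μ) / ∫ y, w y ∂μ)
      ≤ ∫ y, w y * Real.exp (φ y) ∂μ := by
  set c := (∫ y, w y * φ y ∂μ) / ∫ y, w y ∂μ
  -- tangent line of `exp` at `c`
  have tangent : ∀ᵐ y ∂μ, Real.exp c * (w y * φ y - c * w y + w y) ≤ w y * Real.exp (φ y) := by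
    filter_upwards [hw0] with y hy
    have := Real.add_one_le_exp (φ y - c)
    rw [Real.exp_sub] at this
    have hc := Real.exp_pos c
    calc Real.exp c * (w y * φ y - c * w y + w y) = w y * (Real.exp c * (φ y - c + 1)) := by ring
      _ ≤ w y * (Real.exp c * (Real.exp (φ y) / Real.exp c)) := by gcongr
      _ = w y * Real.exp (φ y) := by field_simp
  have hsub : Integrable (fun y => w y * φ y - c * w y) μ := hwφ.sub (hw.const_mul c)
  have hint : Integrable (fun y => Real.exp c * (w y * φ y - c * w y + w y)) μ :=
    (hsub.add hw).const_mul _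
  refine le_trans (le_of_eq ?_) (integral_mono_ae hint hwexp tangent)
  rw [integral_const_mul, integral_add hsub hw, integral_sub hwφ (hw.const_mul c),
    integral_const_mul]
  simp only [c]
  field_simp
  ring

theorem le_toReal_spectralRadius_of_pow_le_norm_pow {A : Type*} [NormedRing A]
    [NormedAlgebra ℂ A] [CompleteSpace A] (a : A) {c : ℝ} (hc : 0 ≤ c)
    (hpow : ∀ m : ℕ, c ^ m ≤ ‖a ^ m‖) : c ≤ (spectralRadius ℂ a).toReal := by
  have hfin : spectralRadius ℂ a ≠ ∞ :=
    ((spectrum.spectralRadius_le_pow_nnnorm_pow_one_div ℂ a 0).trans_lt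
      (ENNReal.mul_lt_top (ENNReal.rpow_lt_top_of_nonneg (by norm_num) ENNReal.coe_ne_top)
        (ENNReal.rpow_lt_top_of_nonneg (by norm_num) ENNReal.coe_ne_top))).ne
  refine (ENNReal.ofReal_le_iff_le_toReal hfin).1 <|
    ge_of_tendsto (spectrum.pow_norm_pow_one_div_tendsto_nhds_spectralRadius a) ?_
  filter_upwards [eventually_ge_atTop 1] with m hm
  refine ENNReal.ofReal_le_ofReal ?_
  calc c = (c ^ m) ^ (1 / m : ℝ) := by
        rw [← Real.rpow_natCast, ← Real.rpow_mul hc, mul_one_div_cancel (by positivity),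
          Real.rpow_one]
    _ ≤ ‖a ^ m‖ ^ (1 / m : ℝ) := by gcongr; exact hpow m

theorem exists_measurable_pos_ae_eq_ofReal {F : X → ℂ} (hF : AEStronglyMeasurable F μ)
    (hpos : ∀ᵐ x ∂μ, 0 < F x) :
    ∃ v : X → ℝ, Measurable v ∧ (∀ x, 0 < v x) ∧ F =ᵐ[μ] fun x => (v x : ℂ) := by
  obtain ⟨G, hGm, hFG⟩ := hF
  have hre : Measurable fun x => (G x).re := Complex.measurable_re.comp hGm.measurable
  refine ⟨fun x => if 0 < (G x).re then (G x).re else 1,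
    hre.ite (measurableSet_lt measurable_const hre) measurable_const, fun x => ?_, ?_⟩
  · dsimp only
    split_ifs with h
    exacts [h, one_pos]
  · filter_upwards [hpos, hFG] with x hx hxG
    rw [hxG] at hx ⊢
    obtain ⟨hre0, him⟩ := Complex.pos_iff.1 hx
    rw [if_pos hre0]
    exact Complex.ext (by simp) (by simp [him])

theorem Lp.memLp_of_ae_eq_ofReal {p : ℝ≥0∞} {u : Lp ℂ p μ} {v : X → ℝ}
    (hv : (u : X → ℂ) =ᵐ[μ] fun x => (v x : ℂ)) : MemLp v p μ := by
  simpa using ((Lp.memLp u).ae_eq hv).re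

theorem L2.inner_eq_integral_of_ae_eq_ofReal {a b : Lp ℂ 2 μ} {a' b' : X → ℝ}
    (ha : (a : X → ℂ) =ᵐ[μ] fun x => (a' x : ℂ)) (hb : (b : X → ℂ) =ᵐ[μ] fun x => (b' x : ℂ)) :
    inner ℂ a b = ((∫ x, a' x * b' x ∂μ : ℝ) : ℂ) := by
  rw [L2.inner_def, ← integral_complex_ofReal]
  refine integral_congr_ae ?_
  filter_upwards [ha, hb] with x hax hbx
  simp [hax, hbx, mul_comm]

theorem L2.integrable_mul_of_ae_eq_ofReal {a b : Lp ℂ 2 μ} {a' b' : X → ℝ}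
    (ha : (a : X → ℂ) =ᵐ[μ] fun x => (a' x : ℂ)) (hb : (b : X → ℂ) =ᵐ[μ] fun x => (b' x : ℂ)) :
    Integrable (fun x => a' x * b' x) μ :=
  (Lp.memLp_of_ae_eq_ofReal ha).integrable_mul (Lp.memLp_of_ae_eq_ofReal hb)

theorem memLp_two_sqrt {h : X → ℝ} (hh : Integrable h μ) (hh0 : ∀ x, 0 ≤ h x) :
    MemLp (fun x => Real.sqrt (h x)) 2 μ := by
  refine (memLp_two_iff_integrable_sq
    hh.aestronglyMeasurable.aemeasurable.sqrt.aestronglyMeasurable).2 ?_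
  simpa only [Real.sq_sqrt (hh0 _)] using hh

theorem exists_Lp_ae_eq_sqrt {h : X → ℝ} (hh0 : ∀ x, 0 ≤ h x) (hhi : Integrable h μ)
    (hh1 : ∫ x, h x ∂μ = 1) :
    ∃ H : Lp ℂ 2 μ, (H : X → ℂ) =ᵐ[μ] (fun x => (Real.sqrt (h x) : ℂ)) ∧ ‖H‖ = 1 := by
  have hmem := (memLp_two_sqrt hhi hh0).ofReal (K := ℂ)
  refine ⟨hmem.toLp _, hmem.coeFn_toLp, ?_⟩
  have := L2.inner_eq_integral_of_ae_eq_ofReal (a' := fun x => Real.sqrt (h x))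
    (b' := fun x => Real.sqrt (h x)) hmem.coeFn_toLp hmem.coeFn_toLp
  simp only [Real.mul_self_sqrt (hh0 _), hh1, inner_self_eq_norm_sq_to_K] at this
  rw [← RCLike.ofReal_pow] at this
  exact (pow_eq_one_iff_of_nonneg (norm_nonneg _) two_ne_zero).1 (Complex.ofReal_injective this)

theorem indicatorConstLp_one_ae_eq_ofReal {s : Set X} (hs : MeasurableSet s) (hμs : μ s ≠ ∞) :
    (indicatorConstLp 2 hs hμs (1 : ℂ) : X → ℂ) =ᵐ[μ] fun x => ((s.indicator 1 x : ℝ) : ℂ) := by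
  filter_upwards [indicatorConstLp_coeFn (p := 2) (hs := hs) (hμs := hμs) (c := (1 : ℂ))]
    with x hx
  rw [hx]
  by_cases hxs : x ∈ s <;> simp [hxs]

theorem Set.indicator_one_mul {α : Type*} (s : Set α) (g : α → ℝ) :
    (fun x => s.indicator 1 x * g x) = s.indicator g := by
  ext x
  by_cases hxs : x ∈ s <;> simp [hxs]

/-- The kernel clause of `IsPosKernelOp`. -/
def HasIntegralKernel (μ : Measure X) (K : Lp ℂ 2 μ →L[ℂ] Lp ℂ 2 μ) (k : X → X → ℝ) : Prop :=
  ∀ f : Lp ℂ 2 μ,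
    (∀ᵐ x ∂μ, Integrable (fun y => k x y * ‖(f : X → ℂ) y‖) μ) ∧
    (∀ᵐ x ∂μ, (K f : X → ℂ) x = ∫ y, (k x y : ℂ) * (f : X → ℂ) y ∂μ)

namespace HasIntegralKernel

variable {K : Lp ℂ 2 μ →L[ℂ] Lp ℂ 2 μ} {k : X → X → ℝ}

theorem ae_eq_integral (hK : HasIntegralKernel μ K k) {u : Lp ℂ 2 μ} {v : X → ℝ}
    (hv0 : ∀ x, 0 ≤ v x) (hu : (u : X → ℂ) =ᵐ[μ] fun x => (v x : ℂ)) :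
    (∀ᵐ x ∂μ, Integrable (fun y => k x y * v y) μ) ∧
      (K u : X → ℂ) =ᵐ[μ] fun x => ((∫ y, k x y * v y ∂μ : ℝ) : ℂ) := by
  have hnorm : (fun y => ‖(u : X → ℂ) y‖) =ᵐ[μ] v := by
    filter_upwards [hu] with y hy
    rw [hy, Complex.norm_real, Real.norm_of_nonneg (hv0 y)]
  refine ⟨?_, ?_⟩
  · filter_upwards [(hK u).1] with x hx
    exact hx.congr (hnorm.mono fun y hy => by simp only [hy])
  · filter_upwards [(hK u).2] with x hx
    rw [hx, ← integral_complex_ofReal]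
    refine integral_congr_ae ?_
    filter_upwards [hu] with y hy
    simp [hy]

theorem ae_integral_eq_of_eigen (hK : HasIntegralKernel μ K k) {u : Lp ℂ 2 μ} {f : X → ℝ}
    (hf0 : ∀ x, 0 ≤ f x) (hu : (u : X → ℂ) =ᵐ[μ] fun x => (f x : ℂ)) {ρ : ℝ}
    (heig : K u = (ρ : ℂ) • u) :
    ∀ᵐ x ∂μ, ∫ y, k x y * f y ∂μ = ρ * f x := by
  filter_upwards [(hK.ae_eq_integral hf0 hu).2, Lp.coeFn_smul (ρ : ℂ) u, hu]
    with x hKx hsmul hux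
  rw [heig, hsmul, Pi.smul_apply, hux, smul_eq_mul, ← Complex.ofReal_mul] at hKx
  exact_mod_cast hKx.symm

theorem ae_eq_setIntegral_indicator (hK : HasIntegralKernel μ K k) {s : Set X}
    (hs : MeasurableSet s) (hμs : μ s ≠ ∞) :
    (∀ᵐ x ∂μ, IntegrableOn (k x) s μ) ∧
      (K (indicatorConstLp 2 hs hμs (1 : ℂ)) : X → ℂ)
        =ᵐ[μ] fun x => ((∫ y in s, k x y ∂μ : ℝ) : ℂ) := by
  have hind : ∀ x, (fun y => k x y * s.indicator 1 y) = s.indicator (k x) := fun x => by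
    ext y
    by_cases hys : y ∈ s <;> simp [hys]
  obtain ⟨hint, hrep⟩ := hK.ae_eq_integral (v := s.indicator 1)
    (Set.indicator_nonneg fun _ _ => zero_le_one) (indicatorConstLp_one_ae_eq_ofReal hs hμs)
  refine ⟨?_, ?_⟩
  · filter_upwards [hint] with x hx
    rwa [hind, integrable_indicator_iff hs] at hx
  · filter_upwards [hrep] with x hx
    rw [hx, hind, integral_indicator hs]

theorem integral_setIntegral_mul_of_adjoint_eigen (hK : HasIntegralKernel μ K k)
    {u : Lp ℂ 2 μ} {g : X → ℝ} (hu : (u : X → ℂ) =ᵐ[μ] fun x => (g x : ℂ)) {ρ : ℝ}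
    (heig : ContinuousLinearMap.adjoint K u = (ρ : ℂ) • u) {s : Set X} (hs : MeasurableSet s)
    (hμs : μ s ≠ ∞) :
    ∫ x, (∫ y in s, k x y ∂μ) * g x ∂μ = ρ * ∫ y in s, g y ∂μ := by
  -- `⟪K 1ₛ, u⟫ = ⟪1ₛ, K† u⟫ = ρ ⟪1ₛ, u⟫`, read off in terms of the real representatives
  have h1 := L2.inner_eq_integral_of_ae_eq_ofReal (hK.ae_eq_setIntegral_indicator hs hμs).2 hu
  rw [← ContinuousLinearMap.adjoint_inner_right, heig, inner_smul_right,
    L2.inner_eq_integral_of_ae_eq_ofReal (indicatorConstLp_one_ae_eq_ofReal hs hμs) hu,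
    ← Complex.ofReal_mul, Set.indicator_one_mul, integral_indicator hs] at h1
  exact_mod_cast h1.symm

theorem ae_lintegral_eq_of_adjoint_eigen [SigmaFinite μ] (hK : HasIntegralKernel μ K k)
    (hkm : Measurable (Function.uncurry k)) (hk0 : ∀ x y, 0 ≤ k x y) {u : Lp ℂ 2 μ}
    {g : X → ℝ} (hgm : Measurable g) (hg0 : ∀ x, 0 ≤ g x)
    (hu : (u : X → ℂ) =ᵐ[μ] fun x => (g x : ℂ)) {ρ : ℝ} (hρ : 0 ≤ ρ)
    (heig : ContinuousLinearMap.adjoint K u = (ρ : ℂ) • u) :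
    ∀ᵐ y ∂μ, ∫⁻ x, ENNReal.ofReal (k x y * g x) ∂μ = ENNReal.ofReal (ρ * g y) := by
  have hkg : Measurable fun p : X × X => ENNReal.ofReal (k p.1 p.2 * g p.1) :=
    ENNReal.measurable_ofReal.comp (hkm.mul (hgm.comp measurable_fst))
  refine ae_eq_of_forall_setLIntegral_eq_of_sigmaFinite hkg.lintegral_prod_left'
    (ENNReal.measurable_ofReal.comp (measurable_const.mul hgm)) fun s hs hμs => ?_
  have he := indicatorConstLp_one_ae_eq_ofReal hs hμs.ne
  obtain ⟨hint, hKe⟩ := hK.ae_eq_setIntegral_indicator hs hμs.ne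
  have hgs : IntegrableOn g s μ := by
    rw [← integrable_indicator_iff hs, ← Set.indicator_one_mul]
    exact L2.integrable_mul_of_ae_eq_ofReal he hu
  calc ∫⁻ y in s, ∫⁻ x, ENNReal.ofReal (k x y * g x) ∂μ ∂μ
      = ∫⁻ x, ∫⁻ y in s, ENNReal.ofReal (g x) * ENNReal.ofReal (k x y) ∂μ ∂μ := by
        rw [lintegral_lintegral_swap (f := fun y x => ENNReal.ofReal (k x y * g x))
          (hkg.comp measurable_swap).aemeasurable]
        simp_rw [← ENNReal.ofReal_mul (hg0 _), mul_comm (g _)]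
    _ = ∫⁻ x, ENNReal.ofReal ((∫ y in s, k x y ∂μ) * g x) ∂μ := by
        refine lintegral_congr_ae ?_
        filter_upwards [hint] with x hx
        rw [lintegral_const_mul' _ _ ENNReal.ofReal_ne_top,
          ← ofReal_integral_eq_lintegral_ofReal hx (ae_of_all _ (hk0 x)),
          ← ENNReal.ofReal_mul (hg0 x), mul_comm]
    _ = ENNReal.ofReal (ρ * ∫ y in s, g y ∂μ) := by
        rw [← ofReal_integral_eq_lintegral_ofReal (L2.integrable_mul_of_ae_eq_ofReal hKe hu)
          (ae_of_all _ fun x => mul_nonneg (setIntegral_nonneg hs fun y _ => hk0 x y) (hg0 x)),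
          hK.integral_setIntegral_mul_of_adjoint_eigen hu heig hs hμs.ne]
    _ = ∫⁻ y in s, ENNReal.ofReal (ρ * g y) ∂μ := by
        rw [← integral_const_mul, ofReal_integral_eq_lintegral_ofReal (hgs.const_mul ρ)
          (ae_of_all _ fun y => mul_nonneg hρ (hg0 y))]

end HasIntegralKernel

/-- The left eigen-equation is stated in `ℝ≥0∞`, where it needs no integrability. -/
structure IsPerronPair (μ : Measure X) (k : X → X → ℝ) (ρ : ℝ) (f g : X → ℝ) : Prop where
  measurable_kernel : Measurable (Function.uncurry k)
  kernel_nonneg : ∀ x y, 0 ≤ k x y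
  measurable_right : Measurable f
  measurable_left : Measurable g
  right_pos : ∀ x, 0 < f x
  left_pos : ∀ x, 0 < g x
  integrable_right : ∀ᵐ x ∂μ, Integrable (fun y => k x y * f y) μ
  right_eigen : ∀ᵐ x ∂μ, ∫ y, k x y * f y ∂μ = ρ * f x
  left_eigen : ∀ᵐ y ∂μ, ∫⁻ x, ENNReal.ofReal (k x y * g x) ∂μ = ENNReal.ofReal (ρ * g y)

theorem HasIntegralKernel.isPerronPair [SigmaFinite μ] {K : Lp ℂ 2 μ →L[ℂ] Lp ℂ 2 μ}
    {k : X → X → ℝ} (hK : HasIntegralKernel μ K k) (hkm : Measurable (Function.uncurry k))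
    (hk0 : ∀ x y, 0 ≤ k x y) {u w : Lp ℂ 2 μ} {f g : X → ℝ} (hfm : Measurable f)
    (hgm : Measurable g) (hf0 : ∀ x, 0 < f x) (hg0 : ∀ x, 0 < g x)
    (hu : (u : X → ℂ) =ᵐ[μ] fun x => (f x : ℂ)) (hw : (w : X → ℂ) =ᵐ[μ] fun x => (g x : ℂ))
    {ρ : ℝ} (hρ : 0 ≤ ρ) (heig : K u = (ρ : ℂ) • u)
    (heig' : ContinuousLinearMap.adjoint K w = (ρ : ℂ) • w) :
    IsPerronPair μ k ρ f g where
  measurable_kernel := hkm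
  kernel_nonneg := hk0
  measurable_right := hfm
  measurable_left := hgm
  right_pos := hf0
  left_pos := hg0
  integrable_right := (hK.ae_eq_integral (fun x => (hf0 x).le) hu).1
  right_eigen := hK.ae_integral_eq_of_eigen (fun x => (hf0 x).le) hu heig
  left_eigen := hK.ae_lintegral_eq_of_adjoint_eigen hkm hk0 hgm (fun x => (hg0 x).le) hw hρ heig'

theorem exists_isPerronPair_of_isPosKernelOp [SigmaFinite μ] {ι : Type*} (i₀ : ι)
    {K : ι → (Lp ℂ 2 μ →L[ℂ] Lp ℂ 2 μ)} (hK : ∀ i, IsPosKernelOp μ (K i)) {f g : ι → Lp ℂ 2 μ}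
    (hf : ∀ i, ∀ᵐ x ∂μ, 0 < (f i : X → ℂ) x) (hg : ∀ i, ∀ᵐ x ∂μ, 0 < (g i : X → ℂ) x)
    {ρ : ι → ℝ} (hρ : ∀ i, 0 ≤ ρ i) (heig : ∀ i, K i (f i) = (ρ i : ℂ) • f i)
    (heig' : ∀ i, ContinuousLinearMap.adjoint (K i) (g i) = (ρ i : ℂ) • g i) {h : X → ℝ}
    (hfg : ∀ i, ∀ᵐ x ∂μ, (f i : X → ℂ) x * (g i : X → ℂ) x = (h x : ℂ)) :
    ∃ (k : ι → X → X → ℝ) (F G : ι → X → ℝ) (h' : X → ℝ),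
      (∀ i, HasIntegralKernel μ (K i) (k i)) ∧ (∀ i, IsPerronPair μ (k i) (ρ i) (F i) (G i)) ∧
      (∀ i, MemLp (F i) 2 μ) ∧ (∀ i, MemLp (G i) 2 μ) ∧ (∀ i x, F i x * G i x = h' x) ∧
      h' =ᵐ[μ] h := by
  choose k hkm hk0 hkK using hK
  choose F hFm hF0 hfF using
    fun i => exists_measurable_pos_ae_eq_ofReal (Lp.aestronglyMeasurable (f i)) (hf i)
  choose G hGm hG0 hgG using
    fun i => exists_measurable_pos_ae_eq_ofReal (Lp.aestronglyMeasurable (g i)) (hg i)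
  have hFG : ∀ i, (fun x => F i x * G i x) =ᵐ[μ] h := fun i => by
    filter_upwards [hfg i, hfF i, hgG i] with x hx hFx hGx
    rw [hFx, hGx] at hx
    exact_mod_cast hx
  -- rescaling makes `F i * G' i` independent of `i` everywhere, not only almost everywhere
  set h' : X → ℝ := fun x => F i₀ x * G i₀ x
  set G' : ι → X → ℝ := fun i x => h' x / F i x
  have hgG' : ∀ i, (g i : X → ℂ) =ᵐ[μ] fun x => (G' i x : ℂ) := fun i => by
    filter_upwards [hgG i, hFG i, hFG i₀] with x hx hi hi₀
    rw [hx, Complex.ofReal_inj, eq_div_iff (hF0 i x).ne', mul_comm, hi, ← hi₀]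
  have hkK' : ∀ i, HasIntegralKernel μ (K i) (k i) := hkK
  refine ⟨k, F, G', h', hkK', fun i => (hkK' i).isPerronPair (hkm i) (hk0 i) (hFm i)
    (((hFm i₀).mul (hGm i₀)).div (hFm i)) (hF0 i)
    (fun x => div_pos (mul_pos (hF0 i₀ x) (hG0 i₀ x)) (hF0 i x)) (hfF i) (hgG' i) (hρ i)
    (heig i) (heig' i), fun i => Lp.memLp_of_ae_eq_ofReal (hfF i),
    fun i => Lp.memLp_of_ae_eq_ofReal (hgG' i),
    fun i x => mul_div_cancel₀ _ (hF0 i x).ne', hFG i₀⟩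

namespace IsPerronPair

variable {k : X → X → ℝ} {ρ : ℝ} {f g : X → ℝ}

theorem lintegral_left_mul [SigmaFinite μ] (hP : IsPerronPair μ k ρ f g) (hρ : 0 ≤ ρ) {F : X → ℝ}
    (hFm : Measurable F) :
    ∫⁻ x, ENNReal.ofReal (g x) * ∫⁻ y, ENNReal.ofReal (k x y * F y) ∂μ ∂μ
      = ENNReal.ofReal ρ * ∫⁻ y, ENNReal.ofReal (g y * F y) ∂μ := by
  have hm : Measurable fun p : X × X =>
      ENNReal.ofReal (g p.1) * ENNReal.ofReal (k p.1 p.2 * F p.2) :=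
    (ENNReal.measurable_ofReal.comp (hP.measurable_left.comp measurable_fst)).mul
      (ENNReal.measurable_ofReal.comp (hP.measurable_kernel.mul (hFm.comp measurable_snd)))
  calc ∫⁻ x, ENNReal.ofReal (g x) * ∫⁻ y, ENNReal.ofReal (k x y * F y) ∂μ ∂μ
      = ∫⁻ y, ∫⁻ x, ENNReal.ofReal (g x) * ENNReal.ofReal (k x y * F y) ∂μ ∂μ := by
        simp_rw [← lintegral_const_mul' _ _ ENNReal.ofReal_ne_top]
        exact lintegral_lintegral_swap hm.aemeasurable
    _ = ∫⁻ y, ENNReal.ofReal (ρ * g y) * ENNReal.ofReal (F y) ∂μ := by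
        refine lintegral_congr_ae ?_
        filter_upwards [hP.left_eigen] with y hy
        rw [← hy, ← lintegral_mul_const' _ _ ENNReal.ofReal_ne_top]
        refine lintegral_congr fun x => ?_
        rw [← ENNReal.ofReal_mul (hP.left_pos x).le, ← ENNReal.ofReal_mul
          (mul_nonneg (hP.kernel_nonneg x y) (hP.left_pos x).le)]
        ring_nf
    _ = ENNReal.ofReal ρ * ∫⁻ y, ENNReal.ofReal (g y * F y) ∂μ := by
        rw [← lintegral_const_mul' _ _ ENNReal.ofReal_ne_top]
        refine lintegral_congr fun y => ?_
        rw [← ENNReal.ofReal_mul hρ, ← ENNReal.ofReal_mul (mul_nonneg hρ (hP.left_pos y).le),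
          mul_assoc]

theorem integral_left_mul_of_nonneg [SigmaFinite μ] (hP : IsPerronPair μ k ρ f g) (hρ : 0 ≤ ρ)
    {F : X → ℝ} (hFm : Measurable F) (hF0 : ∀ y, 0 ≤ F y)
    (hgF : Integrable (fun y => g y * F y) μ) :
    (∀ᵐ x ∂μ, Integrable (fun y => k x y * F y) μ) ∧
      Integrable (fun x => g x * ∫ y, k x y * F y ∂μ) μ ∧
      ∫ x, g x * ∫ y, k x y * F y ∂μ ∂μ = ρ * ∫ y, g y * F y ∂μ := by
  have hkF0 : ∀ x y, 0 ≤ k x y * F y := fun x y => mul_nonneg (hP.kernel_nonneg x y) (hF0 y)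
  have hkFm : Measurable fun p : X × X => k p.1 p.2 * F p.2 :=
    hP.measurable_kernel.mul (hFm.comp measurable_snd)
  set J : X → ℝ≥0∞ := fun x => ∫⁻ y, ENNReal.ofReal (k x y * F y) ∂μ
  have hJm : Measurable J := (ENNReal.measurable_ofReal.comp hkFm).lintegral_prod_right'
  have hgJm : Measurable fun x => ENNReal.ofReal (g x) * J x :=
    (ENNReal.measurable_ofReal.comp hP.measurable_left).mul hJm
  have hgJ : ∫⁻ x, ENNReal.ofReal (g x) * J x ∂μ = ENNReal.ofReal (ρ * ∫ y, g y * F y ∂μ) := by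
    rw [hP.lintegral_left_mul hρ hFm, ← ofReal_integral_eq_lintegral_ofReal hgF
      (ae_of_all _ fun y => mul_nonneg (hP.left_pos y).le (hF0 y)), ENNReal.ofReal_mul hρ]
  have hgJ_fin : ∀ᵐ x ∂μ, ENNReal.ofReal (g x) * J x < ∞ :=
    ae_lt_top hgJm (hgJ ▸ ENNReal.ofReal_ne_top)
  have hJ_fin : ∀ᵐ x ∂μ, J x < ∞ := by
    filter_upwards [hgJ_fin] with x hx
    exact ENNReal.lt_top_of_mul_ne_top_right hx.ne
      (ENNReal.ofReal_pos.2 (hP.left_pos x)).ne'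
  have hsec : ∀ᵐ x ∂μ, Integrable (fun y => k x y * F y) μ := by
    filter_upwards [hJ_fin] with x hx
    exact ⟨(hkFm.comp measurable_prodMk_left).aestronglyMeasurable,
      (hasFiniteIntegral_iff_ofReal (ae_of_all _ (hkF0 x))).2 hx⟩
  have hN : (fun x => g x * ∫ y, k x y * F y ∂μ) =ᵐ[μ]
      fun x => (ENNReal.ofReal (g x) * J x).toReal := by
    filter_upwards [hsec] with x hx
    rw [integral_eq_lintegral_of_nonneg_ae (ae_of_all _ (hkF0 x)) hx.aestronglyMeasurable,
      ENNReal.toReal_mul, ENNReal.toReal_ofReal (hP.left_pos x).le]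
  refine ⟨hsec, (integrable_toReal_of_lintegral_ne_top hgJm.aemeasurable
    (hgJ ▸ ENNReal.ofReal_ne_top)).congr hN.symm, ?_⟩
  rw [integral_congr_ae hN, integral_toReal hgJm.aemeasurable hgJ_fin, hgJ,
    ENNReal.toReal_ofReal]
  exact mul_nonneg hρ (integral_nonneg fun y => mul_nonneg (hP.left_pos y).le (hF0 y))

theorem integral_left_mul [SigmaFinite μ] (hP : IsPerronPair μ k ρ f g) (hρ : 0 ≤ ρ) {F : X → ℝ}
    (hFm : Measurable F) (hgF : Integrable (fun y => g y * F y) μ) :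
    (∀ᵐ x ∂μ, Integrable (fun y => k x y * F y) μ) ∧
      Integrable (fun x => g x * ∫ y, k x y * F y ∂μ) μ ∧
      ∫ x, g x * ∫ y, k x y * F y ∂μ ∂μ = ρ * ∫ y, g y * F y ∂μ := by
  have hpart : ∀ G : X → ℝ, Measurable G → (∀ y, 0 ≤ G y) → (∀ y, G y ≤ |F y|) →
      Integrable (fun y => g y * G y) μ := fun G hGm hG0 hGF =>
    hgF.mono (hP.measurable_left.mul hGm).aestronglyMeasurable (ae_of_all _ fun y => by
      simp only [norm_mul, Real.norm_eq_abs, abs_of_nonneg (hG0 y)]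
      exact mul_le_mul_of_nonneg_left (hGF y) (abs_nonneg _))
  set Fp : X → ℝ := fun y => max (F y) 0
  set Fm : X → ℝ := fun y => max (-F y) 0
  have hFpm : Measurable Fp := hFm.max measurable_const
  have hFmm : Measurable Fm := hFm.neg.max measurable_const
  have hgFp := hpart Fp hFpm (fun _ => le_max_right _ _)
    fun y => max_le (le_abs_self _) (abs_nonneg _)
  have hgFm := hpart Fm hFmm (fun _ => le_max_right _ _)
    fun y => max_le (neg_le_abs _) (abs_nonneg _)
  obtain ⟨hsec₁, hint₁, heq₁⟩ :=
    hP.integral_left_mul_of_nonneg hρ hFpm (fun _ => le_max_right _ _) hgFp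
  obtain ⟨hsec₂, hint₂, heq₂⟩ :=
    hP.integral_left_mul_of_nonneg hρ hFmm (fun _ => le_max_right _ _) hgFm
  have hsplit : ∀ x y, k x y * F y = k x y * Fp y - k x y * Fm y := fun x y => by
    rw [← mul_sub, max_zero_sub_max_neg_zero_eq_self]
  have hsec : ∀ᵐ x ∂μ, Integrable (fun y => k x y * F y) μ := by
    filter_upwards [hsec₁, hsec₂] with x h₁ h₂
    simp only [hsplit x]
    exact h₁.sub h₂
  have hN : (fun x => g x * ∫ y, k x y * F y ∂μ) =ᵐ[μ]
      fun x => g x * (∫ y, k x y * Fp y ∂μ) - g x * ∫ y, k x y * Fm y ∂μ := by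
    filter_upwards [hsec₁, hsec₂] with x h₁ h₂
    rw [← mul_sub, ← integral_sub h₁ h₂]
    simp only [← hsplit]
  refine ⟨hsec, (hint₁.sub hint₂).congr hN.symm, ?_⟩
  rw [integral_congr_ae hN, integral_sub hint₁ hint₂, heq₁, heq₂, ← mul_sub,
    ← integral_sub hgFp hgFm]
  simp only [← mul_sub, Fp, Fm, max_zero_sub_max_neg_zero_eq_self]

theorem ae_mul_exp_le_integral (hP : IsPerronPair μ k ρ f g) (hρ : 0 < ρ) {v : X → ℝ}
    (hv0 : ∀ x, 0 < v x) (hkv : ∀ᵐ x ∂μ, Integrable (fun y => k x y * v y) μ)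
    (hkφ : ∀ᵐ x ∂μ, Integrable (fun y => k x y * (f y * Real.log (v y / f y))) μ) :
    ∀ᵐ x ∂μ, ρ * f x * Real.exp ((∫ y, k x y * (f y * Real.log (v y / f y)) ∂μ) / (ρ * f x))
      ≤ ∫ y, k x y * v y ∂μ := by
  -- Jensen for the probability measure `k x y f y dy / (ρ f x)`
  filter_upwards [hP.integrable_right, hP.right_eigen, hkφ, hkv] with x hi he hs hk
  have hf0 := hP.right_pos
  have hexp : ∀ y, k x y * f y * Real.exp (Real.log (v y / f y)) = k x y * v y := fun y => by
    rw [Real.exp_log (div_pos (hv0 y) (hf0 y)), mul_assoc, mul_div_cancel₀ _ (hf0 y).ne']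
  have := integral_mul_exp_ge (w := fun y => k x y * f y) (φ := fun y => Real.log (v y / f y))
    hi (by simpa only [mul_assoc] using hs) (by simpa only [hexp] using hk)
    (ae_of_all _ fun y => mul_nonneg (hP.kernel_nonneg x y) (hf0 y).le)
    (he ▸ mul_pos hρ (hf0 x))
  simpa only [he, hexp, mul_assoc] using this

end IsPerronPair

def weightedLogRatio (h v : X → ℝ) (x : X) : ℝ :=
  h x * Real.log (v x / Real.sqrt (h x))

theorem integrable_weightedLogRatio_of_le {h V L : X → ℝ} (hh0 : ∀ x, 0 < h x)
    (hhm : Measurable h) (hVm : AEMeasurable V μ) (hV0 : ∀ᵐ x ∂μ, 0 < V x)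
    (hVi : Integrable (fun x => Real.sqrt (h x) * V x) μ) (hL : Integrable L μ)
    (hLV : ∀ᵐ x ∂μ, L x ≤ weightedLogRatio h V x) :
    Integrable (weightedLogRatio h V) μ :=
  integrable_of_le_of_le
    (hhm.aemeasurable.mul ((hVm.div hhm.sqrt.aemeasurable).log)).aestronglyMeasurable hLV
    (by filter_upwards [hV0] with x hx using mul_log_div_sqrt_le (hh0 x) hx) hL hVi

theorem integrable_weightedLogRatio_of_mul_eq {f g h : X → ℝ} (hfm : Measurable f)
    (hgm : Measurable g) (hf0 : ∀ x, 0 < f x) (hg0 : ∀ x, 0 < g x)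
    (hfg : ∀ x, f x * g x = h x) (hf : Integrable (fun x => Real.sqrt (h x) * f x) μ)
    (hg : Integrable (fun x => Real.sqrt (h x) * g x) μ) :
    Integrable (weightedLogRatio h f) μ := by
  have hh0 : ∀ x, 0 < h x := fun x => hfg x ▸ mul_pos (hf0 x) (hg0 x)
  -- `f / √h` and `g / √h` are reciprocal
  have hneg : ∀ x, weightedLogRatio h f x = -weightedLogRatio h g x := fun x => by
    have hs := Real.sqrt_pos.2 (hh0 x)
    have hinv : f x / Real.sqrt (h x) = (g x / Real.sqrt (h x))⁻¹ := by
      rw [inv_div, div_eq_div_iff hs.ne' (hg0 x).ne', ← sq, Real.sq_sqrt (hh0 x).le, hfg]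
    simp only [weightedLogRatio, hinv, Real.log_inv, mul_neg]
  refine integrable_weightedLogRatio_of_le hh0 (funext hfg ▸ hfm.mul hgm) hfm.aemeasurable
    (ae_of_all _ hf0) hf hg.neg (ae_of_all _ fun x => ?_)
  rw [hneg]
  exact neg_le_neg (mul_log_div_sqrt_le (hh0 x) (hg0 x))

theorem exp_integral_weightedLogRatio_le {h v : X → ℝ} (hh0 : ∀ x, 0 < h x)
    (hhi : Integrable h μ) (hh1 : ∫ x, h x ∂μ = 1) (hv0 : ∀ᵐ x ∂μ, 0 < v x)
    (hvi : Integrable (fun x => Real.sqrt (h x) * v x) μ)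
    (hv : Integrable (weightedLogRatio h v) μ) :
    Real.exp (∫ x, weightedLogRatio h v x ∂μ) ≤ ∫ x, Real.sqrt (h x) * v x ∂μ := by
  have hexp : (fun x => h x * Real.exp (Real.log (v x / Real.sqrt (h x))))
      =ᵐ[μ] fun x => Real.sqrt (h x) * v x := by
    filter_upwards [hv0] with x hx
    have hs := Real.sqrt_pos.2 (hh0 x)
    rw [Real.exp_log (div_pos hx hs)]
    field_simp
    rw [Real.sq_sqrt (hh0 x).le]
  have := integral_mul_exp_ge hhi hv (hvi.congr hexp.symm) (ae_of_all _ fun x => (hh0 x).le)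
    (hh1 ▸ one_pos)
  rwa [hh1, one_mul, div_one, integral_congr_ae hexp] at this

theorem IsPerronPair.integral_weightedLogRatio_add_log_le [SigmaFinite μ] {k : X → X → ℝ}
    {ρ : ℝ} {f g : X → ℝ} (hP : IsPerronPair μ k ρ f g) (hρ : 0 < ρ) {h : X → ℝ}
    (hfg : ∀ x, f x * g x = h x) (hh1 : ∫ x, h x ∂μ = 1) (hf2 : MemLp f 2 μ)
    (hg2 : MemLp g 2 μ) {v : X → ℝ} (hvm : Measurable v) (hv0 : ∀ x, 0 < v x)
    (hkv : ∀ᵐ x ∂μ, Integrable (fun y => k x y * v y) μ)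
    (hKv2 : MemLp (fun x => ∫ y, k x y * v y ∂μ) 2 μ)
    (hv : Integrable (weightedLogRatio h v) μ) :
    (∀ᵐ x ∂μ, 0 < ∫ y, k x y * v y ∂μ) ∧
      Integrable (weightedLogRatio h fun x => ∫ y, k x y * v y ∂μ) μ ∧
      ∫ x, weightedLogRatio h v x ∂μ + Real.log ρ
        ≤ ∫ x, weightedLogRatio h (fun x => ∫ y, k x y * v y ∂μ) x ∂μ := by
  set Kv : X → ℝ := fun x => ∫ y, k x y * v y ∂μ
  have hf0 := hP.right_pos
  have hh0 : ∀ x, 0 < h x := fun x => hfg x ▸ mul_pos (hf0 x) (hP.left_pos x)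
  have hhm : Measurable h := funext hfg ▸ hP.measurable_right.mul hP.measurable_left
  have hhi : Integrable h μ := funext hfg ▸ hf2.integrable_mul hg2
  have hsqrt := memLp_two_sqrt hhi fun x => (hh0 x).le
  have hwf : Integrable (weightedLogRatio h f) μ :=
    integrable_weightedLogRatio_of_mul_eq hP.measurable_right hP.measurable_left hf0
      hP.left_pos hfg (hsqrt.integrable_mul hf2) (hsqrt.integrable_mul hg2)
  set φ : X → ℝ := fun y => Real.log (v y / f y)
  have hφ : ∀ x, g x * (f x * φ x) = weightedLogRatio h v x - weightedLogRatio h f x :=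
    fun x => mul_mul_log_div_eq_sub (hf0 x) (hP.left_pos x) (hv0 x) (hfg x)
  obtain ⟨hsec, hgN, hgN_eq⟩ := hP.integral_left_mul (F := fun y => f y * φ y) hρ.le
    (hP.measurable_right.mul (hvm.div hP.measurable_right).log)
    ((hv.sub hwf).congr (ae_of_all _ fun x => (hφ x).symm))
  have hjensen := hP.ae_mul_exp_le_integral hρ hv0 hkv hsec
  set N : X → ℝ := fun x => ∫ y, k x y * (f y * φ y) ∂μ
  have hlower : ∀ᵐ x ∂μ, h x * Real.log ρ + weightedLogRatio h f x + g x * N x / ρ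
      ≤ weightedLogRatio h Kv x := by
    filter_upwards [hjensen] with x hx
      using mul_log_add_le_of_mul_exp_le hρ (hf0 x) (hP.left_pos x) (hfg x) hx
  have hlogρ : Integrable (fun x => h x * Real.log ρ) μ := hhi.mul_const _
  have hL : Integrable (fun x => h x * Real.log ρ + weightedLogRatio h f x + g x * N x / ρ) μ :=
    (hlogρ.add hwf).add (hgN.div_const ρ)
  have hKv0 : ∀ᵐ x ∂μ, 0 < Kv x := by
    filter_upwards [hjensen] with x hx
    exact lt_of_lt_of_le (by have := hf0 x; positivity) hx
  have hKvi := integrable_weightedLogRatio_of_le hh0 hhm hKv2.aestronglyMeasurable.aemeasurable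
    hKv0 (hsqrt.integrable_mul hKv2) hL hlower
  refine ⟨hKv0, hKvi, le_trans (le_of_eq ?_) (integral_mono_ae hL hKvi hlower)⟩
  have hgNρ : ∫ x, g x * N x / ρ ∂μ
      = ∫ x, weightedLogRatio h v x ∂μ - ∫ x, weightedLogRatio h f x ∂μ := by
    rw [integral_div, hgN_eq, mul_div_cancel_left₀ _ hρ.ne', ← integral_sub hv hwf]
    exact integral_congr_ae (ae_of_all _ hφ)
  rw [integral_add (f := fun x => h x * Real.log ρ + weightedLogRatio h f x)
    (hlogρ.add hwf) (hgN.div_const ρ), integral_add (g := weightedLogRatio h f) hlogρ hwf,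
    integral_mul_const, hh1, hgNρ]
  ring

theorem integral_weightedLogRatio_sum_ge {ι : Type*} (s : Finset ι) (hs : s.Nonempty)
    {t ρ : ι → ℝ} (ht : ∀ i ∈ s, 0 < t i) (hρ : ∀ i ∈ s, 0 < ρ i) {h V : X → ℝ}
    {W : ι → X → ℝ} (hh0 : ∀ x, 0 < h x) (hhm : Measurable h) (hhi : Integrable h μ)
    (hh1 : ∫ x, h x ∂μ = 1)
    (hW0 : ∀ i ∈ s, ∀ᵐ x ∂μ, 0 < W i x)
    (hWi : ∀ i ∈ s, Integrable (weightedLogRatio h (W i)) μ) {e : ℝ}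
    (hWe : ∀ i ∈ s, e + Real.log (ρ i) ≤ ∫ x, weightedLogRatio h (W i) x ∂μ)
    (hV : ∀ᵐ x ∂μ, ∑ i ∈ s, t i * W i x ≤ V x) (hVm : AEMeasurable V μ)
    (hVi : Integrable (fun x => Real.sqrt (h x) * V x) μ) :
    (∀ᵐ x ∂μ, 0 < V x) ∧ Integrable (weightedLogRatio h V) μ ∧
      e + Real.log (∑ i ∈ s, t i * ρ i) ≤ ∫ x, weightedLogRatio h V x ∂μ := by
  set c := ∑ i ∈ s, t i * ρ i
  set θ : ι → ℝ := fun i => t i * ρ i / c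
  have hc : 0 < c := Finset.sum_pos (fun i hi => mul_pos (ht i hi) (hρ i hi)) hs
  have hθ1 : ∑ i ∈ s, θ i = 1 := by rw [← Finset.sum_div, div_self hc.ne']
  have hWall : ∀ᵐ x ∂μ, ∀ i ∈ s, 0 < W i x := (eventually_all_finset s).2 hW0
  have hV0 : ∀ᵐ x ∂μ, 0 < V x := by
    filter_upwards [hWall, hV] with x hW hVx
    exact (Finset.sum_pos (fun i hi => mul_pos (ht i hi) (hW i hi)) hs).trans_le hVx
  set L : X → ℝ := fun x =>
    h x * Real.log c + ∑ i ∈ s, θ i * (weightedLogRatio h (W i) x - h x * Real.log (ρ i))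
  have hlower : ∀ᵐ x ∂μ, L x ≤ weightedLogRatio h V x := by
    filter_upwards [hWall, hV] with x hW hVx
      using mul_log_add_sum_le_mul_log s hs ht hρ hW (hh0 x) hVx
  have hterm : ∀ i ∈ s,
      Integrable (fun x => θ i * (weightedLogRatio h (W i) x - h x * Real.log (ρ i))) μ :=
    fun i hi => ((hWi i hi).sub (hhi.mul_const _)).const_mul _
  have hLi : Integrable L μ := (hhi.mul_const _).add (integrable_finsetSum s hterm)
  have hVint := integrable_weightedLogRatio_of_le hh0 hhm hVm hV0 hVi hLi hlower
  refine ⟨hV0, hVint, le_trans ?_ (integral_mono_ae hLi hVint hlower)⟩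
  rw [integral_add (hhi.mul_const _) (integrable_finsetSum s hterm), integral_mul_const, hh1,
    one_mul, integral_finsetSum s hterm]
  calc e + Real.log c = Real.log c + ∑ i ∈ s, θ i * e := by rw [← Finset.sum_mul, hθ1]; ring
    _ ≤ Real.log c
          + ∑ i ∈ s, ∫ x, θ i * (weightedLogRatio h (W i) x - h x * Real.log (ρ i)) ∂μ := by
        gcongr with i hi
        rw [integral_const_mul, integral_sub (hWi i hi) (hhi.mul_const _), integral_mul_const,
          hh1, one_mul]
        exact mul_le_mul_of_nonneg_left (by linarith [hWe i hi])
          (div_pos (mul_pos (ht i hi) (hρ i hi)) hc).le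

def HasLogRatioLowerBound (μ : Measure X) (h : X → ℝ) (u : Lp ℂ 2 μ) (e : ℝ) : Prop :=
  ∃ v : X → ℝ, Measurable v ∧ (∀ x, 0 < v x) ∧ (u : X → ℂ) =ᵐ[μ] (fun x => (v x : ℂ)) ∧
    Integrable (weightedLogRatio h v) μ ∧ e ≤ ∫ x, weightedLogRatio h v x ∂μ

namespace HasLogRatioLowerBound

variable {h : X → ℝ}

theorem of_ae_eq_sqrt (hh0 : ∀ x, 0 < h x) (hhm : Measurable h) {H : Lp ℂ 2 μ}
    (hH : (H : X → ℂ) =ᵐ[μ] fun x => (Real.sqrt (h x) : ℂ)) : HasLogRatioLowerBound μ h H 0 := by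
  have hzero : weightedLogRatio h (fun x => Real.sqrt (h x)) = 0 := funext fun x => by
    simp [weightedLogRatio, div_self (Real.sqrt_pos.2 (hh0 x)).ne']
  refine ⟨fun x => Real.sqrt (h x), hhm.sqrt, fun x => Real.sqrt_pos.2 (hh0 x), hH, ?_, ?_⟩
  · exact hzero ▸ integrable_zero _ _ _
  · simp [hzero]

theorem of_ae_eq {u : Lp ℂ 2 μ} {V : X → ℝ} (huV : (u : X → ℂ) =ᵐ[μ] fun x => (V x : ℂ))
    (hV0 : ∀ᵐ x ∂μ, 0 < V x) (hV : Integrable (weightedLogRatio h V) μ) {e : ℝ}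
    (he : e ≤ ∫ x, weightedLogRatio h V x ∂μ) : HasLogRatioLowerBound μ h u e := by
  obtain ⟨v, hvm, hv0, huv⟩ := exists_measurable_pos_ae_eq_ofReal (Lp.aestronglyMeasurable u)
    (by filter_upwards [huV, hV0] with x hx hx0 using hx ▸ Complex.zero_lt_real.2 hx0)
  have hVv : weightedLogRatio h V =ᵐ[μ] weightedLogRatio h v := by
    filter_upwards [huV, huv] with x hV hv
    simp only [weightedLogRatio, Complex.ofReal_injective (hV.symm.trans hv)]
  exact ⟨v, hvm, hv0, huv, hV.congr hVv, he.trans_eq (integral_congr_ae hVv)⟩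

theorem exp_le_norm {u : Lp ℂ 2 μ} {e : ℝ} (hu : HasLogRatioLowerBound μ h u e)
    (hh0 : ∀ x, 0 < h x) (hhi : Integrable h μ) (hh1 : ∫ x, h x ∂μ = 1) {H : Lp ℂ 2 μ}
    (hH : (H : X → ℂ) =ᵐ[μ] fun x => (Real.sqrt (h x) : ℂ)) (hH1 : ‖H‖ = 1) :
    Real.exp e ≤ ‖u‖ := by
  obtain ⟨v, -, hv0, huv, hvi, he⟩ := hu
  have hinner : ∫ x, Real.sqrt (h x) * v x ∂μ ≤ ‖u‖ := by
    have h1 := L2.inner_eq_integral_of_ae_eq_ofReal hH huv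
    have h2 := norm_inner_le_norm (𝕜 := ℂ) H u
    rw [h1, hH1, one_mul, Complex.norm_real] at h2
    exact (le_abs_self _).trans h2
  exact (Real.exp_le_exp.2 he).trans ((exp_integral_weightedLogRatio_le hh0 hhi hh1
    (ae_of_all _ hv0) (L2.integrable_mul_of_ae_eq_ofReal hH huv) hvi).trans hinner)

theorem sum_smul_apply [SigmaFinite μ] {ι : Type*} [Fintype ι]
    {K : ι → (Lp ℂ 2 μ →L[ℂ] Lp ℂ 2 μ)} {k : ι → X → X → ℝ} {ρ t : ι → ℝ}
    {f g : ι → X → ℝ} (hK : ∀ i, HasIntegralKernel μ (K i) (k i))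
    (hP : ∀ i, IsPerronPair μ (k i) (ρ i) (f i) (g i)) (hρ : ∀ i, 0 ≤ ρ i)
    (ht : ∀ i, 0 < t i) (hc : 0 < ∑ i, t i * ρ i) (hf2 : ∀ i, MemLp (f i) 2 μ)
    (hg2 : ∀ i, MemLp (g i) 2 μ) (hfg : ∀ i x, f i x * g i x = h x) (hh0 : ∀ x, 0 < h x)
    (hhm : Measurable h) (hhi : Integrable h μ) (hh1 : ∫ x, h x ∂μ = 1)
    {u : Lp ℂ 2 μ} {e : ℝ} (hu : HasLogRatioLowerBound μ h u e) :
    HasLogRatioLowerBound μ h ((∑ i, (t i : ℂ) • K i) u) (e + Real.log (∑ i, t i * ρ i)) := by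
  obtain ⟨v, hvm, hv0, huv, hvi, he⟩ := hu
  set W : ι → X → ℝ := fun i x => ∫ y, k i x y * v y ∂μ
  have hKu : ∀ i, (∀ᵐ x ∂μ, Integrable (fun y => k i x y * v y) μ) ∧
      (K i u : X → ℂ) =ᵐ[μ] fun x => (W i x : ℂ) :=
    fun i => (hK i).ae_eq_integral (fun x => (hv0 x).le) huv
  have hW2 : ∀ i, MemLp (W i) 2 μ := fun i => Lp.memLp_of_ae_eq_ofReal (hKu i).2
  set V : X → ℝ := fun x => ∑ i, t i * W i x
  have hTu : ((∑ i, (t i : ℂ) • K i) u : X → ℂ) =ᵐ[μ] fun x => (V x : ℂ) := by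
    rw [sum_apply]
    filter_upwards [Lp.coeFn_fun_finsetSum Finset.univ fun i => (t i : ℂ) • K i u,
      ae_all_iff.2 fun i => Lp.coeFn_smul (t i : ℂ) (K i u), ae_all_iff.2 fun i => (hKu i).2]
      with x hsum hsmul hW
    simp only [smul_apply, hsum, hsmul, Pi.smul_apply, hW, V,
      Complex.ofReal_sum, Complex.ofReal_mul, smul_eq_mul]
  set S := Finset.univ.filter fun i => 0 < ρ i
  have hSsum : ∑ i ∈ S, t i * ρ i = ∑ i, t i * ρ i :=
    Finset.sum_filter_of_ne fun i _ hi =>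
      lt_of_le_of_ne (hρ i) fun h0 => hi (by rw [← h0, mul_zero])
  have hS : S.Nonempty := Finset.nonempty_of_sum_ne_zero (hSsum ▸ hc.ne')
  have hρS : ∀ i ∈ S, 0 < ρ i := fun i hi => (Finset.mem_filter.1 hi).2
  have hstep := fun i (hi : i ∈ S) => (hP i).integral_weightedLogRatio_add_log_le (hρS i hi)
    (hfg i) hh1 (hf2 i) (hg2 i) hvm hv0 (hKu i).1 (hW2 i) hvi
  have hV2 : MemLp V 2 μ := Lp.memLp_of_ae_eq_ofReal hTu
  obtain ⟨hV0, hVi, hVe⟩ := integral_weightedLogRatio_sum_ge S hS (fun i _ => ht i) hρS hh0 hhm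
    hhi hh1 (fun i hi => (hstep i hi).1) (fun i hi => (hstep i hi).2.1)
    (fun i hi => (hstep i hi).2.2) (ae_of_all _ fun x => Finset.sum_le_sum_of_subset_of_nonneg
      (Finset.filter_subset _ _) fun i _ _ => mul_nonneg (ht i).le
        (integral_nonneg fun y => mul_nonneg ((hP i).kernel_nonneg x y) (hv0 y).le))
    hV2.aestronglyMeasurable.aemeasurable
    ((memLp_two_sqrt hhi fun x => (hh0 x).le).integrable_mul hV2)
  rw [hSsum] at hVe
  exact of_ae_eq hTu hV0 hVi (by linarith)

theorem sum_smul_pow_apply [SigmaFinite μ] {ι : Type*} [Fintype ι]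
    {K : ι → (Lp ℂ 2 μ →L[ℂ] Lp ℂ 2 μ)} {k : ι → X → X → ℝ} {ρ t : ι → ℝ}
    {f g : ι → X → ℝ} (hK : ∀ i, HasIntegralKernel μ (K i) (k i))
    (hP : ∀ i, IsPerronPair μ (k i) (ρ i) (f i) (g i)) (hρ : ∀ i, 0 ≤ ρ i)
    (ht : ∀ i, 0 < t i) (hc : 0 < ∑ i, t i * ρ i) (hf2 : ∀ i, MemLp (f i) 2 μ)
    (hg2 : ∀ i, MemLp (g i) 2 μ) (hfg : ∀ i x, f i x * g i x = h x) (hh0 : ∀ x, 0 < h x)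
    (hhm : Measurable h) (hhi : Integrable h μ) (hh1 : ∫ x, h x ∂μ = 1)
    {u : Lp ℂ 2 μ} {e : ℝ} (hu : HasLogRatioLowerBound μ h u e) (m : ℕ) :
    HasLogRatioLowerBound μ h (((∑ i, (t i : ℂ) • K i) ^ m) u)
      (e + m * Real.log (∑ i, t i * ρ i)) := by
  induction m with
  | zero => simpa using hu
  | succ m ih =>
    rw [pow_succ', mul_apply_eq_comp, Nat.cast_succ, add_one_mul, ← add_assoc]
    exact ih.sum_smul_apply hK hP hρ ht hc hf2 hg2 hfg hh0 hhm hhi hh1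

end HasLogRatioLowerBound

end

theorem spectralRadius_sum_kernel_ge_general
    {X : Type*} [MeasurableSpace X] (μ : Measure X) [SigmaFinite μ]
    (n : ℕ) (K : Fin n → (Lp ℂ 2 μ →L[ℂ] Lp ℂ 2 μ))
    (hK : ∀ i, IsPosKernelOp μ (K i))
    (f g : Fin n → Lp ℂ 2 μ)
    (hf : ∀ i, ∀ᵐ x ∂μ, 0 < (f i : X → ℂ) x)
    (hg : ∀ i, ∀ᵐ x ∂μ, 0 < (g i : X → ℂ) x)
    (heig : ∀ i, K i (f i) = ((spectralRadius ℂ (K i)).toReal : ℂ) • f i)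
    (heig' : ∀ i, ContinuousLinearMap.adjoint (K i) (g i)
        = ((spectralRadius ℂ (K i)).toReal : ℂ) • g i)
    (h : X → ℝ)
    (hfg : ∀ i, ∀ᵐ x ∂μ, (f i : X → ℂ) x * (g i : X → ℂ) x = (h x : ℂ))
    (hh1 : ∫ x, h x ∂μ = 1)
    (t : Fin n → ℝ) (ht : ∀ i, 0 < t i) :
    ∑ i, t i * (spectralRadius ℂ (K i)).toReal
      ≤ (spectralRadius ℂ (∑ i, (t i : ℂ) • K i)).toReal := by
  set ρ : Fin n → ℝ := fun i => (spectralRadius ℂ (K i)).toReal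
  have hρ : ∀ i, 0 ≤ ρ i := fun i => ENNReal.toReal_nonneg
  rcases (Finset.sum_nonneg fun i _ => mul_nonneg (ht i).le (hρ i)).eq_or_lt with hc | hc
  · exact hc ▸ ENNReal.toReal_nonneg
  obtain ⟨i₀, -⟩ := Finset.nonempty_of_sum_ne_zero hc.ne'
  obtain ⟨k, F, G, h', hkK, hP, hF2, hG2, hFG, hh'⟩ :=
    exists_isPerronPair_of_isPosKernelOp i₀ hK hf hg hρ heig heig' hfg
  have hh'0 : ∀ x, 0 < h' x :=
    fun x => hFG i₀ x ▸ mul_pos ((hP i₀).right_pos x) ((hP i₀).left_pos x)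
  have hh'm : Measurable h' :=
    funext (hFG i₀) ▸ (hP i₀).measurable_right.mul (hP i₀).measurable_left
  have hh'i : Integrable h' μ := funext (hFG i₀) ▸ (hF2 i₀).integrable_mul (hG2 i₀)
  have hh'1 : ∫ x, h' x ∂μ = 1 := (integral_congr_ae hh').trans hh1
  obtain ⟨H, hH, hH1⟩ := exists_Lp_ae_eq_sqrt (fun x => (hh'0 x).le) hh'i hh'1
  refine le_toReal_spectralRadius_of_pow_le_norm_pow _ hc.le fun m => ?_
  calc (∑ i, t i * ρ i) ^ m = Real.exp (0 + m * Real.log (∑ i, t i * ρ i)) := by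
        rw [zero_add, Real.exp_nat_mul, Real.exp_log hc]
    _ ≤ ‖((∑ i, (t i : ℂ) • K i) ^ m) H‖ :=
        ((HasLogRatioLowerBound.of_ae_eq_sqrt hh'0 hh'm hH).sum_smul_pow_apply hkK hP hρ ht hc hF2 hG2
          hFG hh'0 hh'm hh'i hh'1 m).exp_le_norm hh'0 hh'i hh'1 hH hH1
    _ ≤ ‖(∑ i, (t i : ℂ) • K i) ^ m‖ := by
        simpa only [hH1, mul_one] using ContinuousLinearMap.le_opNorm _ H

theorem spectralRadius_sum_kernel_ge
    {X : Type*} [MeasurableSpace X] (μ : Measure X) [SigmaFinite μ]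
    (n : ℕ) (K : Fin n → (Lp ℂ 2 μ →L[ℂ] Lp ℂ 2 μ))
    (hK : ∀ i, IsPosKernelOp μ (K i))
    (f g : Fin n → Lp ℂ 2 μ)
    (hf : ∀ i, ∀ᵐ x ∂μ, 0 < (f i : X → ℂ) x)
    (hg : ∀ i, ∀ᵐ x ∂μ, 0 < (g i : X → ℂ) x)
    (heig : ∀ i, K i (f i) = ((spectralRadius ℂ (K i)).toReal : ℂ) • f i)
    (heig' : ∀ i, ContinuousLinearMap.adjoint (K i) (g i)
        = ((spectralRadius ℂ (K i)).toReal : ℂ) • g i)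
    (h : X → ℝ) (hhm : Measurable h)
    (hfg : ∀ i, ∀ᵐ x ∂μ, (f i : X → ℂ) x * (g i : X → ℂ) x = (h x : ℂ))
    (hh1 : ∫ x, h x ∂μ = 1)
    (t : Fin n → ℝ) (ht : ∀ i, 0 < t i) :
    ∑ i, t i * (spectralRadius ℂ (K i)).toReal
      ≤ (spectralRadius ℂ (∑ i, (t i : ℂ) • K i)).toReal :=
  spectralRadius_sum_kernel_ge_general μ n K hK f g hf hg heig heig' h hfg hh1 t ht
end
end

section
/- Let A be a positive bounded linear operator on L²(X, μ), let d ∈ L^∞(X, μ) be strictly positive with 1/d ∈ L^∞(X, μ), and let D be the corresponding (invertible) multiplication operator. Then r( D A D^{-1} + A* ) ≥ 2·r(A). -/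
/-!
With `E` the multiplication by `√d`, we have `D = E²`, so `D A D⁻¹ + A*` is similar to `C + C*`
where `C = E A E⁻¹` is again positive. Spectral radii are similarity invariants and `C + C*` is
self-adjoint, so it suffices to show `2 r(C) ≤ ‖C + C*‖`. A spectral value of maximal modulus lies
on the boundary of the spectrum, hence is an approximate eigenvalue, so `r(C)` is bounded by the
numerical radius of `C`. Positivity gives `|C g| ≤ C |g|` pointwise, whence for unit `g`
`|⟨C g, g⟩| ≤ ⟨C |g|, |g|⟩ = ½ ⟨(C + C*) |g|, |g|⟩ ≤ ½ ‖C + C*‖`.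
-/

open MeasureTheory
open scoped ENNReal ComplexOrder

noncomputable section

open Filter Topology InnerProductSpace
open scoped InnerProduct

theorem one_le_norm_sub_mul_norm_inv_of_not_isUnit {R : Type*} [NormedRing R] [CompleteSpace R]
    (u : Rˣ) {a : R} (ha : ¬IsUnit a) : 1 ≤ ‖a - u‖ * ‖(↑u⁻¹ : R)‖ := by
  by_contra! h
  have hsmall : ‖(↑u - a) * ↑u⁻¹‖ < 1 :=
    (norm_mul_le _ _).trans_lt (by rwa [norm_sub_rev])
  refine ha ?_
  have ha' : a = (1 - (↑u - a) * ↑u⁻¹) * ↑u := by simp [sub_mul, mul_assoc]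
  rw [ha']
  exact (Units.oneSub _ hsmall).isUnit.mul u.isUnit

theorem spectrum.mem_frontier_of_nnnorm_eq_spectralRadius {𝕜 A : Type*} [RCLike 𝕜] [NormedRing A]
    [NormedAlgebra 𝕜 A] [CompleteSpace A] {a : A} {l : 𝕜} (hl : l ∈ spectrum 𝕜 a)
    (hmax : (‖l‖₊ : ℝ≥0∞) = spectralRadius 𝕜 a) (hl0 : l ≠ 0) :
    l ∈ frontier (spectrum 𝕜 a) := by
  refine ⟨subset_closure hl, fun hint => ?_⟩
  have hlim : Tendsto (fun t : ℝ => ((1 + t : ℝ) : 𝕜) * l) (𝓝[>] 0) (𝓝 l) := by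
    have : Continuous (fun t : ℝ => ((1 + t : ℝ) : 𝕜) * l) := by fun_prop
    simpa using (this.tendsto 0).mono_left nhdsWithin_le_nhds
  obtain ⟨t, htσ, ht⟩ :=
    ((hlim.eventually (mem_interior_iff_mem_nhds.1 hint)).and self_mem_nhdsWithin).exists
  refine htσ (spectrum.mem_resolventSet_of_spectralRadius_lt ?_)
  rw [← hmax, ENNReal.coe_lt_coe, ← NNReal.coe_lt_coe, coe_nnnorm, coe_nnnorm, norm_mul,
    RCLike.norm_ofReal, abs_of_nonneg (by linarith [ht])]
  exact lt_mul_left (norm_pos_iff.2 hl0) (by linarith [ht])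

section Resolvent

variable {𝕜 E : Type*} [RCLike 𝕜] [NormedAddCommGroup E] [NormedSpace 𝕜 E] [CompleteSpace E]

theorem ContinuousLinearMap.one_le_norm_sub_mul_norm_inv_of_mem_spectrum (T : E →L[𝕜] E)
    {l m : 𝕜} (hl : l ∈ spectrum 𝕜 T) (u : (E →L[𝕜] E)ˣ)
    (hu : (u : E →L[𝕜] E) = algebraMap 𝕜 (E →L[𝕜] E) m - T) :
    1 ≤ ‖l - m‖ * ‖(↑u⁻¹ : E →L[𝕜] E)‖ := by
  refine (one_le_norm_sub_mul_norm_inv_of_not_isUnit u hl).trans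
    (mul_le_mul_of_nonneg_right ?_ (norm_nonneg _))
  rw [hu, sub_sub_sub_cancel_right, ← map_sub, Algebra.algebraMap_eq_smul_one]
  exact (norm_smul_le (l - m) (1 : E →L[𝕜] E)).trans
    (mul_le_of_le_one_right (norm_nonneg _) (norm_id_le (𝕜 := 𝕜) (E := E)))

/-- A resolvent point `m` within `ε / 3` of `l` has `‖(m - T)⁻¹‖ ≥ 3 / ε`; normalizing a vector on
which `(m - T)⁻¹` nearly attains its norm gives an approximate eigenvector. -/
theorem ContinuousLinearMap.exists_norm_apply_sub_smul_le_of_mem_frontier_spectrum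
    (T : E →L[𝕜] E) {l : 𝕜} (hl : l ∈ frontier (spectrum 𝕜 T)) {ε : ℝ} (hε : 0 < ε) :
    ∃ g : E, ‖g‖ = 1 ∧ ‖T g - l • g‖ ≤ ε := by
  rw [frontier_eq_closure_inter_closure, (spectrum.isClosed T).closure_eq] at hl
  obtain ⟨hlσ, hlρ⟩ := hl
  obtain ⟨m, hmρ, hml⟩ := Metric.mem_closure_iff.1 hlρ (ε / 3) (by positivity)
  rw [dist_eq_norm] at hml
  obtain ⟨u, hu⟩ : IsUnit (algebraMap 𝕜 (E →L[𝕜] E) m - T) := not_not.1 hmρ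
  set R : E →L[𝕜] E := ↑u⁻¹
  have hR : 1 ≤ ε / 3 * ‖R‖ := (T.one_le_norm_sub_mul_norm_inv_of_mem_spectrum hlσ u hu).trans
    (mul_le_mul_of_nonneg_right hml.le (norm_nonneg _))
  have hRpos : 0 < ‖R‖ := pos_of_mul_pos_right (one_pos.trans_le hR) (by positivity)
  obtain ⟨x, hx1, hx⟩ := R.exists_lt_apply_of_lt_opNorm (half_lt_self hRpos)
  have hRx : 0 < ‖R x‖ := (half_pos hRpos).trans hx
  have hTRx : T (R x) = m • R x - x := by
    have : (↑u * R) x = x := by rw [u.mul_inv]; rfl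
    rw [hu] at this
    simp only [Algebra.algebraMap_eq_smul_one, mul_apply_eq_comp, sub_apply, smul_apply,
      one_apply_eq_self] at this
    linear_combination (norm := module) -this
  refine ⟨(‖R x‖⁻¹ : 𝕜) • R x, norm_smul_inv_norm (norm_pos_iff.1 hRx), ?_⟩
  calc ‖T ((‖R x‖⁻¹ : 𝕜) • R x) - l • (‖R x‖⁻¹ : 𝕜) • R x‖
      = ‖R x‖⁻¹ * ‖(m - l) • R x - x‖ := by
        rw [map_smul, smul_comm l, ← smul_sub, hTRx, norm_smul, sub_smul]
        simp only [norm_inv, RCLike.norm_ofReal, abs_norm]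
        congr 2; abel
    _ ≤ ‖R x‖⁻¹ * (‖m - l‖ * ‖R x‖ + 1) := by
        gcongr
        exact (norm_sub_le _ _).trans (by rw [norm_smul]; linarith)
    _ = ‖m - l‖ + ‖R x‖⁻¹ := by field_simp
    _ ≤ ε / 3 + 2 * ε / 3 := by
        gcongr
        · rw [norm_sub_rev]; exact hml.le
        · rw [inv_le_iff_one_le_mul₀ hRx]; nlinarith
    _ = ε := by ring

end Resolvent

theorem spectralRadius_units_conjugate {𝕜 A : Type*} [NormedField 𝕜] [Ring A] [Algebra 𝕜 A]
    (u : Aˣ) (a : A) : spectralRadius 𝕜 (↑u * a * ↑u⁻¹) = spectralRadius 𝕜 a := by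
  simp [spectralRadius]

theorem Units.sq_conj_add_star_eq_conj {R : Type*} [Ring R] [StarRing R] (u : Rˣ)
    (hu : IsSelfAdjoint (u : R)) (hu' : IsSelfAdjoint (↑u⁻¹ : R)) (a : R) :
    ↑u * ↑u * (a * (↑u⁻¹ * ↑u⁻¹)) + star a
      = ↑u * (↑u * a * ↑u⁻¹ + star (↑u * a * ↑u⁻¹)) * ↑u⁻¹ := by
  rw [star_mul, star_mul, hu.star_eq, hu'.star_eq, mul_add, add_mul]
  congr 1
  · simp only [mul_assoc]
  · calc star a = ↑u * ↑u⁻¹ * star a * (↑u * ↑u⁻¹) := by rw [u.mul_inv, one_mul, mul_one]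
      _ = _ := by simp only [mul_assoc]

section InnerProductSpace

variable {𝕜 H : Type*} [RCLike 𝕜] [NormedAddCommGroup H] [InnerProductSpace 𝕜 H]

theorem ContinuousLinearMap.spectralRadius_le_of_forall_norm_inner_le [CompleteSpace H]
    (T : H →L[𝕜] H) {c : ℝ}
    (h : ∀ g : H, ‖g‖ = 1 → ‖⟪T g, g⟫_𝕜‖ ≤ c) : spectralRadius 𝕜 T ≤ ENNReal.ofReal c := by
  rcases (spectrum 𝕜 T).eq_empty_or_nonempty with hσ | hσ
  · simp [spectralRadius, hσ]
  obtain ⟨l, hlσ, hl⟩ := spectrum.exists_nnnorm_eq_spectralRadius_of_nonempty hσ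
  rw [← hl]
  rcases eq_or_ne l 0 with rfl | hl0
  · simp
  have hfr := spectrum.mem_frontier_of_nnnorm_eq_spectralRadius hlσ hl hl0
  rw [← enorm_eq_nnnorm, ← ofReal_norm]
  refine ENNReal.ofReal_le_ofReal (le_of_forall_pos_le_add fun ε hε => ?_)
  obtain ⟨g, hg, hTg⟩ := T.exists_norm_apply_sub_smul_le_of_mem_frontier_spectrum hfr hε
  calc ‖l‖ = ‖⟪T g, g⟫_𝕜 - ⟪T g - l • g, g⟫_𝕜‖ := by
        rw [← inner_sub_left, sub_sub_cancel, inner_smul_left, inner_self_eq_norm_sq_to_K, hg]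
        simp
    _ ≤ ‖⟪T g, g⟫_𝕜‖ + ‖⟪T g - l • g, g⟫_𝕜‖ := norm_sub_le _ _
    _ ≤ c + ε := by
        gcongr
        · exact h g hg
        · exact (norm_inner_le_norm _ _).trans (by rw [hg, mul_one]; exact hTg)

theorem ContinuousLinearMap.two_mul_re_inner_apply_self_le [CompleteSpace H] (T : H →L[𝕜] H)
    (g : H) :
    2 * RCLike.re ⟪T g, g⟫_𝕜 ≤ ‖T + adjoint T‖ * ‖g‖ ^ 2 := by
  have hsum : RCLike.re ⟪(T + adjoint T) g, g⟫_𝕜 = 2 * RCLike.re ⟪T g, g⟫_𝕜 := by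
    rw [add_apply, inner_add_left, adjoint_inner_left, ← inner_conj_symm (T g), map_add,
      RCLike.conj_re]
    ring
  calc 2 * RCLike.re ⟪T g, g⟫_𝕜 = RCLike.re ⟪(T + adjoint T) g, g⟫_𝕜 := hsum.symm
    _ ≤ ‖(T + adjoint T) g‖ * ‖g‖ := (RCLike.re_le_norm _).trans (norm_inner_le_norm _ _)
    _ ≤ ‖T + adjoint T‖ * ‖g‖ * ‖g‖ := by gcongr; exact le_opNorm _ _
    _ = ‖T + adjoint T‖ * ‖g‖ ^ 2 := by ring

end InnerProductSpace

theorem Complex.norm_le_of_forall_rat_re_exp_mul_le {z : ℂ} {a : ℝ}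
    (h : ∀ q : ℚ, (exp (-((q : ℝ) : ℂ) * I) * z).re ≤ a) : ‖z‖ ≤ a := by
  have hall : ∀ θ : ℝ, (exp (-(θ : ℂ) * I) * z).re ≤ a := fun θ =>
    Rat.denseRange_cast.induction_on θ (isClosed_le (by fun_prop) continuous_const) h
  have hrot : exp (-(arg z : ℂ) * I) * z = ‖z‖ :=
    calc exp (-(arg z : ℂ) * I) * z = exp (-(arg z : ℂ) * I) * (‖z‖ * exp (arg z * I)) := by
          rw [norm_mul_exp_arg_mul_I]
      _ = ‖z‖ := by rw [mul_left_comm, ← exp_add, neg_mul, neg_add_cancel, exp_zero, mul_one]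
  simpa only [hrot, ofReal_re] using hall (arg z)

namespace MeasureTheory.Lp

variable {X : Type*} [MeasurableSpace X] {μ : Measure X} {p : ℝ≥0∞}

def modulus (f : Lp ℂ p μ) : Lp ℂ p μ :=
  (Complex.isometry_ofReal.lipschitz.comp (lipschitzWith_one_norm (E := ℂ))).compLp (by simp) f

theorem coeFn_modulus (f : Lp ℂ p μ) : modulus f =ᵐ[μ] fun x => ((‖f x‖ : ℝ) : ℂ) :=
  LipschitzWith.coeFn_compLp _ _ f

theorem norm_modulus (f : Lp ℂ p μ) : ‖modulus f‖ = ‖f‖ := by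
  rw [Lp.norm_def, Lp.norm_def]
  congr 1
  refine eLpNorm_congr_norm_ae ?_
  filter_upwards [coeFn_modulus f] with x hx
  simp [hx]

theorem modulus_smul {c : ℂ} (hc : ‖c‖ = 1) (f : Lp ℂ p μ) : modulus (c • f) = modulus f := by
  refine Lp.ext ?_
  filter_upwards [coeFn_modulus (c • f), coeFn_modulus f, Lp.coeFn_smul c f] with x h1 h2 h3
  simp [h1, h2, h3, hc]

def rePart (f : Lp ℂ p μ) : Lp ℂ p μ := (Complex.ofRealCLM.comp Complex.reCLM).compLp f

def imPart (f : Lp ℂ p μ) : Lp ℂ p μ := (Complex.ofRealCLM.comp Complex.imCLM).compLp f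

theorem coeFn_rePart (f : Lp ℂ p μ) : rePart f =ᵐ[μ] fun x => ((f x).re : ℂ) :=
  ContinuousLinearMap.coeFn_compLp' _ f

theorem coeFn_imPart (f : Lp ℂ p μ) : imPart f =ᵐ[μ] fun x => ((f x).im : ℂ) :=
  ContinuousLinearMap.coeFn_compLp' _ f

theorem rePart_add_I_smul_imPart (f : Lp ℂ p μ) : rePart f + Complex.I • imPart f = f := by
  refine Lp.ext ?_
  filter_upwards [coeFn_rePart f, coeFn_imPart f, Lp.coeFn_add (rePart f) (Complex.I • imPart f),
    Lp.coeFn_smul Complex.I (imPart f)] with x hre him hadd hsmul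
  rw [hadd, Pi.add_apply, hsmul, Pi.smul_apply, hre, him, smul_eq_mul, mul_comm]
  exact Complex.re_add_im _

end MeasureTheory.Lp

theorem memLp_top_sqrt_of_ae_le {X : Type*} [MeasurableSpace X] {μ : Measure X} {f : X → ℝ}
    (hf : Measurable f) {C : ℝ} (hC : ∀ᵐ x ∂μ, f x ≤ C) : MemLp (fun x => √(f x)) ∞ μ := by
  refine memLp_top_of_bound hf.sqrt.aestronglyMeasurable √C ?_
  filter_upwards [hC] with x hx
  simpa [abs_of_nonneg (Real.sqrt_nonneg _)] using Real.sqrt_le_sqrt hx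

namespace IsMulOp

variable {X : Type*} [MeasurableSpace X] {μ : Measure X} {a b : X → ℝ}
  {P Q : Lp ℂ 2 μ →L[ℂ] Lp ℂ 2 μ}

theorem exists_of_memLp_top (ha : MemLp a ∞ μ) : ∃ P, IsMulOp μ a P := by
  have hc : MemLp (fun x => (a x : ℂ)) ∞ μ := ha.ofReal
  refine ⟨(ContinuousLinearMap.mul ℂ ℂ).holderL μ ∞ 2 2 (hc.toLp _), fun f => ?_⟩
  filter_upwards [(ContinuousLinearMap.mul ℂ ℂ).coeFn_holder (r := 2) (hc.toLp _) f,
    hc.coeFn_toLp] with x hx hax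
  simp [hx, hax]

theorem eq_of_ae_eq (hP : IsMulOp μ a P) (hQ : IsMulOp μ b Q) (hab : a =ᵐ[μ] b) : P = Q := by
  ext1 f
  refine Lp.ext ?_
  filter_upwards [hP f, hQ f, hab] with x hPx hQx hx
  rw [hPx, hQx, hx]

theorem mul (hP : IsMulOp μ a P) (hQ : IsMulOp μ b Q) : IsMulOp μ (a * b) (P * Q) := fun f => by
  change (P (Q f) : X → ℂ) =ᵐ[μ] _
  filter_upwards [hP (Q f), hQ f] with x hPx hQx
  rw [hPx, hQx, Pi.mul_apply, Complex.ofReal_mul, mul_assoc]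

theorem one : IsMulOp μ 1 (1 : Lp ℂ 2 μ →L[ℂ] Lp ℂ 2 μ) := fun f => by
  simp

theorem mul_eq_one (hP : IsMulOp μ a P) (hQ : IsMulOp μ b Q) (hab : ∀ᵐ x ∂μ, a x * b x = 1) :
    P * Q = 1 :=
  (hP.mul hQ).eq_of_ae_eq one hab

theorem exists_units (ha : MemLp a ∞ μ) (ha' : MemLp (fun x => (a x)⁻¹) ∞ μ)
    (ha0 : ∀ᵐ x ∂μ, a x ≠ 0) :
    ∃ u : (Lp ℂ 2 μ →L[ℂ] Lp ℂ 2 μ)ˣ, IsMulOp μ a u ∧ IsMulOp μ (fun x => (a x)⁻¹) ↑u⁻¹ := by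
  obtain ⟨P, hP⟩ := exists_of_memLp_top ha
  obtain ⟨Q, hQ⟩ := exists_of_memLp_top ha'
  refine ⟨⟨P, Q, hP.mul_eq_one hQ ?_, hQ.mul_eq_one hP ?_⟩, hP, hQ⟩
  · filter_upwards [ha0] with x hx using mul_inv_cancel₀ hx
  · filter_upwards [ha0] with x hx using inv_mul_cancel₀ hx

theorem isSelfAdjoint (hP : IsMulOp μ a P) : IsSelfAdjoint P := by
  refine (ContinuousLinearMap.isSelfAdjoint_iff_isSymmetric).2 fun f g => ?_
  rw [ContinuousLinearMap.coe_coe, L2.inner_def, L2.inner_def]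
  refine integral_congr_ae ?_
  filter_upwards [hP f, hP g] with x hfx hgx
  simp only [RCLike.inner_apply, hfx, hgx, map_mul, Complex.conj_ofReal]
  ring

theorem isPositiveOp (hP : IsMulOp μ a P) (ha : ∀ᵐ x ∂μ, 0 ≤ a x) : IsPositiveOp μ P :=
  fun f hf => by
    filter_upwards [hP f, ha, hf] with x hPx hax hfx
    rw [hPx]
    exact mul_nonneg (Complex.zero_le_real.2 hax) hfx

end IsMulOp

namespace IsPositiveOp

open Lp

variable {X : Type*} [MeasurableSpace X] {μ : Measure X} {C : Lp ℂ 2 μ →L[ℂ] Lp ℂ 2 μ}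

theorem mul {B : Lp ℂ 2 μ →L[ℂ] Lp ℂ 2 μ} (hC : IsPositiveOp μ C) (hB : IsPositiveOp μ B) :
    IsPositiveOp μ (C * B) :=
  fun f hf => hC (B f) (hB f hf)

theorem mono (hC : IsPositiveOp μ C) {f g : Lp ℂ 2 μ} (hfg : ∀ᵐ x ∂μ, f x ≤ g x) :
    ∀ᵐ x ∂μ, C f x ≤ C g x := by
  have hpos : ∀ᵐ x ∂μ, 0 ≤ (g - f) x := by
    filter_upwards [hfg, Lp.coeFn_sub g f] with x hx hsub
    rw [hsub, Pi.sub_apply, sub_nonneg]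
    exact hx
  filter_upwards [hC _ hpos, Lp.coeFn_sub (C g) (C f)] with x hx hsub
  rwa [map_sub, hsub, Pi.sub_apply, sub_nonneg] at hx

/-- In `ComplexOrder`, `z ≤ w` forces `z.im = w.im`. As `0 ≤ C (modulus g)`, the bound
`C (imPart g) ≤ C (modulus g)` makes `C (imPart g)` real, so `Re (C g) = Re (C (rePart g))`. -/
theorem re_apply_le_modulus (hC : IsPositiveOp μ C) (g : Lp ℂ 2 μ) :
    ∀ᵐ x ∂μ, (C g x).re ≤ (C (modulus g) x).re := by
  have hre : ∀ᵐ x ∂μ, C (rePart g) x ≤ C (modulus g) x := by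
    refine hC.mono ?_
    filter_upwards [coeFn_rePart g, coeFn_modulus g] with x hre habs
    rw [hre, habs, Complex.real_le_real]
    exact Complex.re_le_norm _
  have him : ∀ᵐ x ∂μ, C (imPart g) x ≤ C (modulus g) x := by
    refine hC.mono ?_
    filter_upwards [coeFn_imPart g, coeFn_modulus g] with x him habs
    rw [him, habs, Complex.real_le_real]
    exact Complex.im_le_norm _
  have habs : ∀ᵐ x ∂μ, 0 ≤ C (modulus g) x := by
    refine hC _ ?_
    filter_upwards [coeFn_modulus g] with x habs
    rw [habs]
    exact Complex.zero_le_real.2 (norm_nonneg _)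
  have hCg : C g = C (rePart g) + Complex.I • C (imPart g) := by
    rw [← map_smul, ← map_add, rePart_add_I_smul_imPart]
  filter_upwards [hre, him, habs, Lp.coeFn_add (C (rePart g)) (Complex.I • C (imPart g)),
    Lp.coeFn_smul Complex.I (C (imPart g))] with x hre him habs hadd hsmul
  rw [hCg, hadd, Pi.add_apply, hsmul, Pi.smul_apply, smul_eq_mul, Complex.add_re,
    Complex.I_mul_re, (Complex.le_def.1 him).2, ← (Complex.le_def.1 habs).2, Complex.zero_im,
    neg_zero, add_zero]
  exact (Complex.le_def.1 hre).1

theorem norm_apply_le_modulus (hC : IsPositiveOp μ C) (g : Lp ℂ 2 μ) :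
    ∀ᵐ x ∂μ, ‖C g x‖ ≤ (C (modulus g) x).re := by
  -- rotating `g` by rational angles only, so that the a.e. statements can be intersected
  have hrot : ∀ q : ℚ, ∀ᵐ x ∂μ,
      (Complex.exp (-((q : ℝ) : ℂ) * Complex.I) * C g x).re ≤ (C (modulus g) x).re := by
    intro q
    set c := Complex.exp (-((q : ℝ) : ℂ) * Complex.I)
    have hc : ‖c‖ = 1 := by
      simp only [c, ← Complex.ofReal_neg, Complex.norm_exp_ofReal_mul_I]
    filter_upwards [hC.re_apply_le_modulus (c • g), Lp.coeFn_smul c (C g)] with x hx hsmul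
    rwa [modulus_smul hc, map_smul, hsmul, Pi.smul_apply, smul_eq_mul] at hx
  filter_upwards [ae_all_iff.2 hrot] with x hx
  exact Complex.norm_le_of_forall_rat_re_exp_mul_le hx

theorem norm_inner_le_re_inner_modulus (hC : IsPositiveOp μ C) (g : Lp ℂ 2 μ) :
    ‖⟪C g, g⟫_ℂ‖ ≤ (⟪C (modulus g), modulus g⟫_ℂ).re := by
  have hint : Integrable (fun x => ⟪C (modulus g) x, modulus g x⟫_ℂ) μ :=
    L2.integrable_inner _ _
  have hpoint : (fun x => (C (modulus g) x).re * ‖g x‖)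
      =ᵐ[μ] fun x => (⟪C (modulus g) x, modulus g x⟫_ℂ).re := by
    filter_upwards [coeFn_modulus g] with x hx
    simp [hx, Complex.mul_re, mul_comm]
  rw [L2.inner_def, L2.inner_def]
  calc ‖∫ x, ⟪C g x, g x⟫_ℂ ∂μ‖ ≤ ∫ x, ‖⟪C g x, g x⟫_ℂ‖ ∂μ := norm_integral_le_integral_norm _
    _ ≤ ∫ x, (C (modulus g) x).re * ‖g x‖ ∂μ := by
        refine integral_mono_ae (L2.integrable_inner (C g) g).norm
          (hint.re.congr hpoint.symm) ?_
        filter_upwards [hC.norm_apply_le_modulus g] with x hx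
        rw [RCLike.inner_apply, norm_mul, RCLike.norm_conj, mul_comm]
        exact mul_le_mul_of_nonneg_right hx (norm_nonneg _)
    _ = ∫ x, (⟪C (modulus g) x, modulus g x⟫_ℂ).re ∂μ := integral_congr_ae hpoint
    _ = (∫ x, ⟪C (modulus g) x, modulus g x⟫_ℂ ∂μ).re := integral_re hint

theorem two_mul_spectralRadius_le (hC : IsPositiveOp μ C) :
    2 * spectralRadius ℂ C ≤ spectralRadius ℂ (C + C†) := by
  rw [← ContinuousLinearMap.star_eq_adjoint,
    (IsSelfAdjoint.add_star_self C).spectralRadius_eq_nnnorm, ← enorm_eq_nnnorm, ← ofReal_norm]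
  have hC2 : spectralRadius ℂ C ≤ ENNReal.ofReal (‖C + star C‖ / 2) := by
    refine C.spectralRadius_le_of_forall_norm_inner_le fun g hg => ?_
    have := C.two_mul_re_inner_apply_self_le (modulus g)
    rw [norm_modulus, hg, ← ContinuousLinearMap.star_eq_adjoint, RCLike.re_to_complex] at this
    linarith [hC.norm_inner_le_re_inner_modulus g]
  calc 2 * spectralRadius ℂ C ≤ 2 * ENNReal.ofReal (‖C + star C‖ / 2) := by gcongr
    _ = ENNReal.ofReal (2 * (‖C + star C‖ / 2)) := by
        rw [ENNReal.ofReal_mul zero_le_two, ENNReal.ofReal_ofNat]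
    _ = ENNReal.ofReal ‖C + star C‖ := by rw [mul_div_cancel₀ _ two_ne_zero]

end IsPositiveOp

theorem spectralRadius_add_adjoint_similarity_general
    {X : Type*} [MeasurableSpace X] (μ : Measure X)
    (A D Dinv : Lp ℂ 2 μ →L[ℂ] Lp ℂ 2 μ) (hA : IsPositiveOp μ A)
    (d : X → ℝ) (hdm : Measurable d)
    (hd0 : ∀ᵐ x ∂μ, 0 < d x)
    (hdb : ∃ C : ℝ, ∀ᵐ x ∂μ, d x ≤ C) (hdib : ∃ C : ℝ, ∀ᵐ x ∂μ, (d x)⁻¹ ≤ C)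
    (hD : IsMulOp μ d D) (hDinv : IsMulOp μ (fun x => (d x)⁻¹) Dinv) :
    2 * spectralRadius ℂ A
      ≤ spectralRadius ℂ (D.comp (A.comp Dinv) + ContinuousLinearMap.adjoint A) := by
  obtain ⟨C₁, hC₁⟩ := hdb
  obtain ⟨C₂, hC₂⟩ := hdib
  obtain ⟨u, hu, hu_inv⟩ := IsMulOp.exists_units (memLp_top_sqrt_of_ae_le hdm hC₁)
    (by simpa only [Pi.inv_apply, Real.sqrt_inv] using memLp_top_sqrt_of_ae_le hdm.inv hC₂)
    (by filter_upwards [hd0] with x hx using (Real.sqrt_pos.2 hx).ne')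
  have hDu : D = u * u := hD.eq_of_ae_eq (hu.mul hu) (by
    filter_upwards [hd0] with x hx using (Real.mul_self_sqrt hx.le).symm)
  have hDinvu : Dinv = ↑u⁻¹ * ↑u⁻¹ := hDinv.eq_of_ae_eq (hu_inv.mul hu_inv) (by
    filter_upwards [hd0] with x hx using by simp [← mul_inv, Real.mul_self_sqrt hx.le])
  set C := ↑u * A * ↑u⁻¹
  have hC : IsPositiveOp μ C :=
    ((hu.isPositiveOp (.of_forall fun _ => Real.sqrt_nonneg _)).mul hA).mul
      (hu_inv.isPositiveOp (.of_forall fun _ => inv_nonneg.2 (Real.sqrt_nonneg _)))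
  have hsimilar : D.comp (A.comp Dinv) + A† = ↑u * (C + C†) * ↑u⁻¹ := by
    rw [hDu, hDinvu, ← ContinuousLinearMap.star_eq_adjoint, ← ContinuousLinearMap.star_eq_adjoint]
    exact u.sq_conj_add_star_eq_conj hu.isSelfAdjoint hu_inv.isSelfAdjoint A
  calc 2 * spectralRadius ℂ A = 2 * spectralRadius ℂ C := by rw [spectralRadius_units_conjugate]
    _ ≤ spectralRadius ℂ (C + C†) := hC.two_mul_spectralRadius_le
    _ = _ := by rw [hsimilar, spectralRadius_units_conjugate]

theorem spectralRadius_add_adjoint_similarity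
    {X : Type*} [MeasurableSpace X] (μ : Measure X) [SigmaFinite μ]
    (A D Dinv : Lp ℂ 2 μ →L[ℂ] Lp ℂ 2 μ) (hA : IsPositiveOp μ A)
    (d : X → ℝ) (hdm : Measurable d)
    (hd0 : ∀ᵐ x ∂μ, 0 < d x)
    (hdb : ∃ C : ℝ, ∀ᵐ x ∂μ, d x ≤ C) (hdib : ∃ C : ℝ, ∀ᵐ x ∂μ, (d x)⁻¹ ≤ C)
    (hD : IsMulOp μ d D) (hDinv : IsMulOp μ (fun x => (d x)⁻¹) Dinv) :
    2 * spectralRadius ℂ A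
      ≤ spectralRadius ℂ (D.comp (A.comp Dinv) + ContinuousLinearMap.adjoint A) :=
  spectralRadius_add_adjoint_similarity_general μ A D Dinv hA d hdm hd0 hdb hdib hD hDinv
end
end

section
/- Let A and B be compact positive kernel operators on L²(X, μ). Then for every t ∈ [0, 1]: max{ ‖t A + (1−t) B*‖, ‖t B + (1−t) A*‖ } ≥ √( r(A B) ). -/
open MeasureTheory
open scoped ENNReal ComplexOrder

noncomputable section

/-!
Pick `l` in the spectrum of `AB` with `‖l‖ = r(AB)`; as a boundary point of the spectrum it is
an approximate eigenvalue, with unit approximate eigenvectors `x`. Positivity of the kernels gives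
`|ABx| ≤ AB|x|` pointwise, so `g = |x|` satisfies `re ⟪g, ABg⟫ ≥ r(AB) - ε`. For
`S = tA + (1-t)B*` and `T = tB + (1-t)A*`,
`re ⟪g, STg⟫ = (t² + (1-t)²) re ⟪g, ABg⟫ + t(1-t) (‖A*g‖² + ‖Bg‖²) ≥ re ⟪g, ABg⟫`
because `re ⟪g, ABg⟫ = re ⟪A*g, Bg⟫ ≤ ‖A*g‖ ‖Bg‖`. Hence `r(AB) ≤ ‖S‖ ‖T‖ ≤ max (‖S‖, ‖T‖)²`.
-/

open scoped InnerProductSpace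

lemma spectrum.mem_closure_resolventSet_of_nnnorm_eq_spectralRadius {𝕜 A : Type*} [RCLike 𝕜]
    [NormedRing A] [NormedAlgebra 𝕜 A] [CompleteSpace A] {a : A} {l : 𝕜}
    (hl : (‖l‖₊ : ℝ≥0∞) = spectralRadius 𝕜 a) : l ∈ closure (resolventSet 𝕜 a) := by
  have houter : (Metric.closedBall (0 : 𝕜) ‖l‖)ᶜ ⊆ resolventSet 𝕜 a := by
    intro m hm
    apply spectrum.mem_resolventSet_of_spectralRadius_lt
    rw [← hl, ENNReal.coe_lt_coe, ← NNReal.coe_lt_coe, coe_nnnorm, coe_nnnorm]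
    simpa using hm
  refine closure_mono houter ?_
  rw [closure_compl, interior_closedBall', Set.mem_compl_iff, Metric.mem_ball, dist_zero_right]
  exact lt_irrefl _

lemma Units.inv_norm_inv_le_norm_sub {R : Type*} [NormedRing R] [HasSummableGeomSeries R]
    (u : Rˣ) {a : R} (ha : ¬IsUnit a) : ‖(↑u⁻¹ : R)‖⁻¹ ≤ ‖a - u‖ :=
  not_lt.mp fun h => ha (u.ofNearby a h).isUnit

namespace ContinuousLinearMap

variable {𝕜 E : Type*} [RCLike 𝕜] [NormedAddCommGroup E] [NormedSpace 𝕜 E] [Nontrivial E]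

lemma exists_norm_eq_one_apply_lt_of_inv_norm_inv_lt
    (U : (E →L[𝕜] E)ˣ) {δ : ℝ} (hU : ‖(↑U⁻¹ : E →L[𝕜] E)‖⁻¹ < δ) :
    ∃ x : E, ‖x‖ = 1 ∧ ‖(U : E →L[𝕜] E) x‖ < δ := by
  have hδ : 0 < δ := (inv_nonneg.mpr (norm_nonneg _)).trans_lt hU
  obtain ⟨y, hy, hUy⟩ := (↑U⁻¹ : E →L[𝕜] E).exists_lt_apply_of_lt_opNorm
    (by rwa [inv_lt_comm₀ (Units.norm_pos _) hδ] at hU : δ⁻¹ < _)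
  set z := (↑U⁻¹ : E →L[𝕜] E) y
  have hz : 0 < ‖z‖ := (inv_pos.mpr hδ).trans hUy
  have hUz : (U : E →L[𝕜] E) z = y := by
    change (↑(U * U⁻¹) : E →L[𝕜] E) y = y
    simp
  refine ⟨(‖z‖⁻¹ : 𝕜) • z, norm_smul_inv_norm (norm_pos_iff.mp hz), ?_⟩
  rw [map_smul, hUz, norm_smul, norm_inv, RCLike.norm_ofReal, abs_norm, inv_mul_lt_iff₀ hz]
  calc ‖y‖ < 1 := hy
    _ < ‖z‖ * δ := by rwa [inv_lt_iff_one_lt_mul₀' hδ, mul_comm] at hUy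

/-- The resolvent `(m - M)⁻¹` has norm at least `1 / ‖m - l‖`, so it blows up as resolvent
points `m` approach `l`. -/
lemma exists_approx_eigenvector [CompleteSpace E] {M : E →L[𝕜] E} {l : 𝕜}
    (hl : l ∈ spectrum 𝕜 M) (hρ : l ∈ closure (resolventSet 𝕜 M)) {ε : ℝ} (hε : 0 < ε) :
    ∃ x : E, ‖x‖ = 1 ∧ ‖M x - l • x‖ < ε := by
  obtain ⟨m, hm, hlm⟩ := Metric.mem_closure_iff.mp hρ (ε / 2) (half_pos hε)
  set U := (spectrum.mem_resolventSet_iff.mp hm).unit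
  have hU : (U : E →L[𝕜] E) = algebraMap 𝕜 _ m - M := IsUnit.unit_spec _
  have hinv : ‖(↑U⁻¹ : E →L[𝕜] E)‖⁻¹ < ε / 2 := by
    refine (U.inv_norm_inv_le_norm_sub (spectrum.mem_iff.mp hl)).trans_lt ?_
    rwa [hU, sub_sub_sub_cancel_right, ← map_sub, norm_algebraMap', ← dist_eq_norm]
  obtain ⟨x, hx, hUx⟩ := exists_norm_eq_one_apply_lt_of_inv_norm_inv_lt U hinv
  refine ⟨x, hx, ?_⟩
  have hsplit : M x - l • x = (m - l) • x - (U : E →L[𝕜] E) x := by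
    rw [hU, sub_apply, algebraMap_apply, sub_smul]; abel
  calc ‖M x - l • x‖ ≤ ‖(m - l) • x‖ + ‖(U : E →L[𝕜] E) x‖ := hsplit ▸ norm_sub_le _ _
    _ < ε / 2 + ε / 2 := by
        rw [norm_smul, hx, mul_one, ← dist_eq_norm, dist_comm]
        exact add_lt_add hlm hUx
    _ = ε := add_halves ε

end ContinuousLinearMap

lemma ContinuousLinearMap.exists_approx_eigenvector_spectralRadius {E : Type*}
    [NormedAddCommGroup E] [NormedSpace ℂ E] [CompleteSpace E] [Nontrivial E]
    (M : E →L[ℂ] E) {ε : ℝ} (hε : 0 < ε) :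
    ∃ l : ℂ, ‖l‖ = (spectralRadius ℂ M).toReal ∧ ∃ x : E, ‖x‖ = 1 ∧ ‖M x - l • x‖ < ε := by
  obtain ⟨l, hl, hlr⟩ := spectrum.exists_nnnorm_eq_spectralRadius M
  refine ⟨l, by rw [← hlr]; rfl, ?_⟩
  exact exists_approx_eigenvector hl
    (spectrum.mem_closure_resolventSet_of_nnnorm_eq_spectralRadius hlr) hε

section Hilbert

open ContinuousLinearMap RCLike
variable {𝕜 E : Type*} [RCLike 𝕜] [NormedAddCommGroup E] [InnerProductSpace 𝕜 E]

lemma re_inner_adjoint_apply_adjoint_apply [CompleteSpace E] (A B : E →L[𝕜] E) (g : E) :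
    re ⟪g, adjoint B (adjoint A g)⟫_𝕜 = re ⟪g, A (B g)⟫_𝕜 := by
  rw [adjoint_inner_right, adjoint_inner_right, ← inner_conj_symm, conj_re]

lemma re_inner_apply_apply_le_re_inner_convex_comb [CompleteSpace E] (A B : E →L[𝕜] E)
    {t : ℝ} (ht₀ : 0 ≤ t) (ht₁ : t ≤ 1) (g : E) :
    re ⟪g, A (B g)⟫_𝕜 ≤ re ⟪g, ((t : 𝕜) • A + ((1 - t : ℝ) : 𝕜) • adjoint B)
      (((t : 𝕜) • B + ((1 - t : ℝ) : 𝕜) • adjoint A) g)⟫_𝕜 := by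
  set P := re ⟪g, A (B g)⟫_𝕜
  have hP : P = re ⟪adjoint A g, B g⟫_𝕜 := by rw [adjoint_inner_left]
  have hAA : re ⟪g, A (adjoint A g)⟫_𝕜 = ‖adjoint A g‖ ^ 2 := by
    rw [← adjoint_inner_left, inner_self_eq_norm_sq]
  have hBB : re ⟪g, adjoint B (B g)⟫_𝕜 = ‖B g‖ ^ 2 := by
    rw [adjoint_inner_right, inner_self_eq_norm_sq]
  have hexpand : re ⟪g, ((t : 𝕜) • A + ((1 - t : ℝ) : 𝕜) • adjoint B)
      (((t : 𝕜) • B + ((1 - t : ℝ) : 𝕜) • adjoint A) g)⟫_𝕜 =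
      (t ^ 2 + (1 - t) ^ 2) * P + t * (1 - t) * (‖adjoint A g‖ ^ 2 + ‖B g‖ ^ 2) := by
    simp only [add_apply, smul_apply, map_add, map_smul, inner_add_right, inner_smul_right,
      map_add, re_ofReal_mul, hAA, hBB, re_inner_adjoint_apply_adjoint_apply, P]
    ring
  have hcs : 2 * P ≤ ‖adjoint A g‖ ^ 2 + ‖B g‖ ^ 2 := by
    nlinarith [hP ▸ re_inner_le_norm (adjoint A g) (B g), sq_nonneg (‖adjoint A g‖ - ‖B g‖)]
  rw [hexpand]
  nlinarith [mul_nonneg ht₀ (sub_nonneg.mpr ht₁)]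

lemma re_inner_apply_apply_le_opNorm_mul_opNorm (S T : E →L[𝕜] E) {g : E} (hg : ‖g‖ = 1) :
    re ⟪g, S (T g)⟫_𝕜 ≤ ‖S‖ * ‖T‖ :=
  calc re ⟪g, S (T g)⟫_𝕜 ≤ ‖g‖ * ‖S (T g)‖ := re_inner_le_norm _ _
    _ ≤ ‖g‖ * (‖S‖ * ‖T‖ * ‖g‖) :=
      mul_le_mul_of_nonneg_left ((S.comp T).le_of_opNorm_le (S.opNorm_comp_le T) g) (norm_nonneg g)
    _ = ‖S‖ * ‖T‖ := by rw [hg]; ring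

end Hilbert

section KernelPositivity

variable {X : Type*} [MeasurableSpace X] {μ : Measure X}

def absLp {p : ℝ≥0∞} (f : Lp ℂ p μ) : Lp ℂ p μ :=
  (Lp.memLp f).norm.ofReal.toLp fun s => (‖f s‖ : ℂ)

lemma coeFn_absLp {p : ℝ≥0∞} (f : Lp ℂ p μ) : absLp f =ᵐ[μ] fun s => (‖f s‖ : ℂ) :=
  MemLp.coeFn_toLp _

lemma norm_absLp {p : ℝ≥0∞} (f : Lp ℂ p μ) : ‖absLp f‖ = ‖f‖ := by
  rw [Lp.norm_def, Lp.norm_def, eLpNorm_congr_ae (coeFn_absLp f), ← eLpNorm_norm (f : X → ℂ)]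
  exact congrArg _ (eLpNorm_congr_norm_ae (.of_forall fun s => by simp))

lemma norm_le_absLp {p : ℝ≥0∞} (f : Lp ℂ p μ) : ∀ᵐ s ∂μ, (‖f s‖ : ℂ) ≤ absLp f s := by
  filter_upwards [coeFn_absLp f] with s hs
  exact hs.ge

lemma IsPosKernelOp.norm_apply_le {K : Lp ℂ 2 μ →L[ℂ] Lp ℂ 2 μ} (hK : IsPosKernelOp μ K)
    {f h : Lp ℂ 2 μ} (hfh : ∀ᵐ y ∂μ, (‖f y‖ : ℂ) ≤ h y) :
    ∀ᵐ s ∂μ, (‖K f s‖ : ℂ) ≤ K h s := by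
  obtain ⟨k, -, hk_nonneg, hk⟩ := hK
  have hh : ∀ᵐ y ∂μ, h y = ((h y).re : ℂ) ∧ ‖f y‖ ≤ (h y).re := by
    filter_upwards [hfh] with y hy
    exact ⟨Complex.eq_re_of_ofReal_le hy, (Complex.le_def.mp hy).1⟩
  filter_upwards [(hk f).1, (hk f).2, (hk h).1, (hk h).2] with s hf_int hKf hh_int hKh
  have hh_int' : Integrable (fun y => k s y * (h y).re) μ := by
    refine hh_int.congr ?_
    filter_upwards [hh] with y hy
    rw [hy.1, Complex.norm_real, Complex.ofReal_re,
      Real.norm_of_nonneg ((norm_nonneg _).trans hy.2)]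
  have hKh_real : K h s = ((∫ y, k s y * (h y).re ∂μ : ℝ) : ℂ) := by
    rw [hKh, ← integral_complex_ofReal]
    refine integral_congr_ae ?_
    filter_upwards [hh] with y hy
    rw [Complex.ofReal_mul, ← hy.1]
  rw [hKh_real, Complex.real_le_real, hKf]
  calc ‖∫ y, (k s y : ℂ) * f y ∂μ‖ ≤ ∫ y, k s y * ‖f y‖ ∂μ := by
        refine (norm_integral_le_integral_norm _).trans_eq (integral_congr_ae (.of_forall ?_))
        simp [Real.norm_of_nonneg (hk_nonneg _ _)]
    _ ≤ ∫ y, k s y * (h y).re ∂μ := by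
        refine integral_mono_ae hf_int hh_int' ?_
        filter_upwards [hh] with y hy
        exact mul_le_mul_of_nonneg_left hy.2 (hk_nonneg s y)

lemma L2.re_inner_nonneg {f g : Lp ℂ 2 μ} (hf : ∀ᵐ s ∂μ, 0 ≤ f s) (hg : ∀ᵐ s ∂μ, 0 ≤ g s) :
    0 ≤ RCLike.re ⟪f, g⟫_ℂ := by
  rw [L2.inner_def, ← integral_re (L2.integrable_inner f g)]
  refine integral_nonneg_of_ae ?_
  filter_upwards [hf, hg] with s hfs hgs
  rw [Pi.zero_apply, RCLike.inner_apply]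
  exact (Complex.nonneg_iff.mp (mul_nonneg hgs (star_nonneg_iff.mpr hfs))).1

lemma IsPosKernelOp.norm_sub_norm_sub_le_re_inner_absLp {A B : Lp ℂ 2 μ →L[ℂ] Lp ℂ 2 μ}
    (hA : IsPosKernelOp μ A) (hB : IsPosKernelOp μ B) {x : Lp ℂ 2 μ} (hx : ‖x‖ = 1) (l : ℂ) :
    ‖l‖ - ‖A (B x) - l • x‖ ≤ RCLike.re ⟪absLp x, A (B (absLp x))⟫_ℂ := by
  generalize he : A (B x) - l • x = e
  have hg : ‖absLp x‖ = 1 := (norm_absLp x).trans hx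
  have hABg := hA.norm_apply_le (hB.norm_apply_le (norm_le_absLp x))
  -- `‖l‖ |x| - |e| ≤ |ABx| ≤ AB|x|` pointwise
  have hlower : ∀ᵐ s ∂μ, 0 ≤ (A (B (absLp x)) - ((‖l‖ : ℂ) • absLp x - absLp e)) s := by
    filter_upwards [hABg, Lp.coeFn_sub (A (B (absLp x))) ((‖l‖ : ℂ) • absLp x - absLp e),
      Lp.coeFn_sub ((‖l‖ : ℂ) • absLp x) (absLp e), Lp.coeFn_smul (‖l‖ : ℂ) (absLp x),
      coeFn_absLp x, coeFn_absLp e, he ▸ Lp.coeFn_sub (A (B x)) (l • x), Lp.coeFn_smul l x]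
      with s hABs hsub₁ hsub₂ hsmul hgs hes hes' hlx
    simp only [hsub₁, hsub₂, hsmul, hgs, hes, Pi.sub_apply, Pi.smul_apply, smul_eq_mul, sub_nonneg]
    refine le_trans ?_ hABs
    norm_cast
    rw [sub_le_iff_le_add, ← norm_mul, hes']
    simpa [Pi.sub_apply, hlx] using norm_le_insert (A (B x) s) (l * x s)
  have hgg : RCLike.re ⟪absLp x, absLp x⟫_ℂ = 1 := by rw [inner_self_eq_norm_sq, hg, one_pow]
  have hge : RCLike.re ⟪absLp x, absLp e⟫_ℂ ≤ ‖e‖ := by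
    simpa only [hg, norm_absLp, one_mul] using re_inner_le_norm (absLp x) (absLp e)
  have hpos := L2.re_inner_nonneg (f := absLp x)
    (by filter_upwards [coeFn_absLp x] with s hs; simp [hs]) hlower
  rw [inner_sub_right, inner_sub_right, inner_smul_right, map_sub, map_sub] at hpos
  simp only [RCLike.re_to_complex, Complex.re_ofReal_mul] at hpos hgg hge ⊢
  rw [hgg] at hpos
  linarith

end KernelPositivity

theorem max_norm_ge_sqrt_spectralRadius_general
    {X : Type*} [MeasurableSpace X] (μ : Measure X)
    (A B : Lp ℂ 2 μ →L[ℂ] Lp ℂ 2 μ)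
    (hA : IsPosKernelOp μ A) (hB : IsPosKernelOp μ B)
    (t : ℝ) (ht : t ∈ Set.Icc (0 : ℝ) 1) :
    Real.sqrt ((spectralRadius ℂ (A.comp B)).toReal)
      ≤ max ‖(t : ℂ) • A + ((1 - t : ℝ) : ℂ) • ContinuousLinearMap.adjoint B‖
          ‖(t : ℂ) • B + ((1 - t : ℝ) : ℂ) • ContinuousLinearMap.adjoint A‖ := by
  set S := (t : ℂ) • A + ((1 - t : ℝ) : ℂ) • ContinuousLinearMap.adjoint B
  set T := (t : ℂ) • B + ((1 - t : ℝ) : ℂ) • ContinuousLinearMap.adjoint A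
  suffices hST : (spectralRadius ℂ (A.comp B)).toReal ≤ ‖S‖ * ‖T‖ by
    have hmax : 0 ≤ max ‖S‖ ‖T‖ := (norm_nonneg S).trans (le_max_left _ _)
    rw [Real.sqrt_le_left hmax, sq]
    exact hST.trans (mul_le_mul (le_max_left _ _) (le_max_right _ _) (norm_nonneg T) hmax)
  rcases subsingleton_or_nontrivial (Lp ℂ 2 μ) with _ | _
  · rw [spectrum.SpectralRadius.of_subsingleton, ENNReal.toReal_zero]
    positivity
  refine le_of_forall_pos_le_add fun ε hε => ?_
  obtain ⟨l, hl, x, hx, hlx⟩ := (A.comp B).exists_approx_eigenvector_spectralRadius hε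
  rw [ContinuousLinearMap.comp_apply] at hlx
  calc (spectralRadius ℂ (A.comp B)).toReal = ‖l‖ := hl.symm
    _ ≤ RCLike.re ⟪absLp x, A (B (absLp x))⟫_ℂ + ε := by
        linarith [hA.norm_sub_norm_sub_le_re_inner_absLp hB hx l, hlx]
    _ ≤ RCLike.re ⟪absLp x, S (T (absLp x))⟫_ℂ + ε :=
        add_le_add_left (re_inner_apply_apply_le_re_inner_convex_comb A B ht.1 ht.2 _) ε
    _ ≤ ‖S‖ * ‖T‖ + ε :=
        add_le_add_left (re_inner_apply_apply_le_opNorm_mul_opNorm S T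
          ((norm_absLp x).trans hx)) ε

theorem max_norm_ge_sqrt_spectralRadius
    {X : Type*} [MeasurableSpace X] (μ : Measure X) [SigmaFinite μ]
    (A B : Lp ℂ 2 μ →L[ℂ] Lp ℂ 2 μ)
    (hA : IsPosKernelOp μ A) (hB : IsPosKernelOp μ B)
    (hAc : IsCompactOperator A) (hBc : IsCompactOperator B)
    (t : ℝ) (ht : t ∈ Set.Icc (0 : ℝ) 1) :
    Real.sqrt ((spectralRadius ℂ (A.comp B)).toReal)
      ≤ max ‖(t : ℂ) • A + ((1 - t : ℝ) : ℂ) • ContinuousLinearMap.adjoint B‖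
          ‖(t : ℂ) • B + ((1 - t : ℝ) : ℂ) • ContinuousLinearMap.adjoint A‖ :=
  max_norm_ge_sqrt_spectralRadius_general μ A B hA hB t ht
end
end

section
/- Let A be a positive bounded linear operator on L²(X, μ). Then for every t ∈ [0, 1] and every a.e. nonnegative f ∈ L²(X, μ), ⟨( t A + (1−t) A* )² f, f⟩ ≥ ⟨A² f, f⟩; equivalently, ⟨( t A + (1−t) A* )² f, f⟩ − ⟨A² f, f⟩ = t(1−t)·‖A f − A* f‖₂² ≥ 0. -/
open MeasureTheory
open scoped ENNReal ComplexOrder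

noncomputable section

/-!
With `g = A f` and `h = A† f`, the operator `B = t A + (1 - t) A†` has `B† = t A† + (1 - t) A`, so
`⟪B² f, f⟫ = ⟪t g + (1 - t) h, t h + (1 - t) g⟫` while `⟪A² f, f⟫ = ⟪g, h⟫`. Expanding the real
part of the first and using `t² + (1 - t)² - 1 = -2 t (1 - t)` gives `t (1 - t) ‖g - h‖²`.
-/

open ContinuousLinearMap RCLike
open scoped InnerProductSpace

section
variable {𝕜 E : Type*} [RCLike 𝕜] [NormedAddCommGroup E] [InnerProductSpace 𝕜 E]

theorem re_inner_smul_add_one_sub_smul_swap_sub (g h : E) (t : ℝ) :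
    re ⟪(t : 𝕜) • g + ((1 - t : ℝ) : 𝕜) • h, (t : 𝕜) • h + ((1 - t : ℝ) : 𝕜) • g⟫_𝕜
      - re ⟪g, h⟫_𝕜 = t * (1 - t) * ‖g - h‖ ^ 2 := by
  have hsymm : re ⟪h, g⟫_𝕜 = re ⟪g, h⟫_𝕜 := inner_re_symm h g
  simp only [inner_add_left, inner_add_right, inner_smul_left, inner_smul_right, conj_ofReal,
    map_add, re_ofReal_mul, inner_self_eq_norm_sq, hsymm, norm_sub_sq (𝕜 := 𝕜)]
  ring

variable [CompleteSpace E]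

theorem inner_sq_apply_self (A : E →L[𝕜] E) (f : E) :
    ⟪(A ^ 2) f, f⟫_𝕜 = ⟪A f, adjoint A f⟫_𝕜 :=
  (adjoint_inner_right A (A f) f).symm

theorem adjoint_ofReal_smul_add_ofReal_smul_adjoint (A : E →L[𝕜] E) (t s : ℝ) :
    adjoint ((t : 𝕜) • A + (s : 𝕜) • adjoint A) = (t : 𝕜) • adjoint A + (s : 𝕜) • A := by
  simp only [map_add, LinearIsometryEquiv.map_smulₛₗ, conj_ofReal, adjoint_adjoint]

theorem re_inner_sq_convex_combination_sub (A : E →L[𝕜] E) (t : ℝ) (f : E) :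
    re ⟪(((t : 𝕜) • A + ((1 - t : ℝ) : 𝕜) • adjoint A) ^ 2) f, f⟫_𝕜 - re ⟪(A ^ 2) f, f⟫_𝕜
      = t * (1 - t) * ‖A f - adjoint A f‖ ^ 2 := by
  rw [inner_sq_apply_self, inner_sq_apply_self, adjoint_ofReal_smul_add_ofReal_smul_adjoint,
    ← re_inner_smul_add_one_sub_smul_swap_sub (𝕜 := 𝕜) (A f) (adjoint A f) t]
  rfl

end

theorem inner_sq_convex_combination_general
    {X : Type*} [MeasurableSpace X] (μ : Measure X)
    (A : Lp ℂ 2 μ →L[ℂ] Lp ℂ 2 μ)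
    (t : ℝ) (ht : t ∈ Set.Icc (0 : ℝ) 1)
    (f : Lp ℂ 2 μ) :
    (inner ℂ ((A ^ 2) f) f : ℂ).re
        ≤ (inner ℂ ((((t : ℂ) • A + ((1 - t : ℝ) : ℂ) • ContinuousLinearMap.adjoint A) ^ 2) f) f
            : ℂ).re
    ∧ (inner ℂ ((((t : ℂ) • A + ((1 - t : ℝ) : ℂ) • ContinuousLinearMap.adjoint A) ^ 2) f) f
          : ℂ).re - (inner ℂ ((A ^ 2) f) f : ℂ).re
        = t * (1 - t) * ‖A f - ContinuousLinearMap.adjoint A f‖ ^ 2 := by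
  have hdiff := re_inner_sq_convex_combination_sub A t f
  have hnonneg : 0 ≤ t * (1 - t) * ‖A f - adjoint A f‖ ^ 2 :=
    mul_nonneg (mul_nonneg ht.1 (sub_nonneg.2 ht.2)) (sq_nonneg _)
  exact ⟨sub_nonneg.1 (hdiff ▸ hnonneg), hdiff⟩

theorem inner_sq_convex_combination
    {X : Type*} [MeasurableSpace X] (μ : Measure X) [SigmaFinite μ]
    (A : Lp ℂ 2 μ →L[ℂ] Lp ℂ 2 μ) (hA : IsPositiveOp μ A)
    (t : ℝ) (ht : t ∈ Set.Icc (0 : ℝ) 1)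
    (f : Lp ℂ 2 μ) (hf : ∀ᵐ x ∂μ, 0 ≤ (f : X → ℂ) x) :
    (inner ℂ ((A ^ 2) f) f : ℂ).re
        ≤ (inner ℂ ((((t : ℂ) • A + ((1 - t : ℝ) : ℂ) • ContinuousLinearMap.adjoint A) ^ 2) f) f
            : ℂ).re
    ∧ (inner ℂ ((((t : ℂ) • A + ((1 - t : ℝ) : ℂ) • ContinuousLinearMap.adjoint A) ^ 2) f) f
          : ℂ).re - (inner ℂ ((A ^ 2) f) f : ℂ).re
        = t * (1 - t) * ‖A f - ContinuousLinearMap.adjoint A f‖ ^ 2 :=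
  inner_sq_convex_combination_general μ A t ht f
end
end
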